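/- arXiv:1508.02832 — 4 statements merged into one kernel-verified Lean document; each statement's English description precedes it below -/
import Mathlib

section
/- For any real number α, any nonnegative integer m, and any δ ∈ [0,1], the inequality |e^{iα} - Σ_{k=0}^{m} (iα)^k/k!| ≤ 2^{1-δ}|α|^{m+δ}/(m!·(m+1)^δ) holds. -/
open Complex Finset Set

noncomputable def Tm (m : ℕ) (t : ℝ) : ℂ :=
  Complex.exp (t * Complex.I) - ∑ k ∈ Finset.range (m + 1), (t * Complex.I) ^ k / (Nat.factorial k)

lemma Tm_zero (m : ℕ) : Tm m 0 = 0 := by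
  simp [Tm, Finset.sum_range_succ']

lemma hasDerivAt_Tm (m : ℕ) (t : ℝ) :
    HasDerivAt (Tm (m + 1)) (Complex.I * Tm m t) t := by
  have hid : HasDerivAt (fun t : ℝ => (t : ℂ)) 1 t := by
    simpa using (hasDerivAt_id t).ofReal_comp
  have hlin : HasDerivAt (fun t : ℝ => (t : ℂ) * Complex.I) Complex.I t := by
    simpa using hid.mul_const Complex.I
  have hexp : HasDerivAt (fun t : ℝ => Complex.exp (t * Complex.I))
      (Complex.exp (t * Complex.I) * Complex.I) t := by
    simpa using hlin.cexp
  have hpow : ∀ k : ℕ, HasDerivAt (fun t : ℝ => ((t : ℂ) * Complex.I) ^ k)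
      ((k : ℂ) * ((t : ℂ) * Complex.I) ^ (k - 1) * Complex.I) t := by
    intro k
    have := (hasDerivAt_pow k ((t : ℂ) * Complex.I)).scomp t hlin
    simpa [smul_eq_mul, mul_comm, Function.comp_def] using this
  have hsum : HasDerivAt (fun t : ℝ => ∑ k ∈ Finset.range (m + 2),
      ((t : ℂ) * Complex.I) ^ k / (Nat.factorial k))
      (Complex.I * ∑ k ∈ Finset.range (m + 1), ((t : ℂ) * Complex.I) ^ k / (Nat.factorial k)) t := by
    have h1 : HasDerivAt (fun t : ℝ => ∑ k ∈ Finset.range (m + 2),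
        ((t : ℂ) * Complex.I) ^ k / (Nat.factorial k))
        (∑ k ∈ Finset.range (m + 2),
          ((k : ℂ) * ((t : ℂ) * Complex.I) ^ (k - 1) * Complex.I) / (Nat.factorial k)) t := by
      apply HasDerivAt.fun_sum
      intro k _
      exact (hpow k).div_const _
    have heq : (∑ k ∈ Finset.range (m + 2),
          ((k : ℂ) * ((t : ℂ) * Complex.I) ^ (k - 1) * Complex.I) / (Nat.factorial k))
        = Complex.I * ∑ k ∈ Finset.range (m + 1), ((t : ℂ) * Complex.I) ^ k / (Nat.factorial k) := by
      rw [Finset.sum_range_succ' (fun k => ((k : ℂ) * ((t : ℂ) * Complex.I) ^ (k - 1) * Complex.I)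
        / (Nat.factorial k)) (m + 1), Finset.mul_sum]
      simp only [Nat.cast_zero, zero_mul, zero_div, add_zero]
      apply Finset.sum_congr rfl
      intro j _
      have hne : ((Nat.factorial j : ℂ)) ≠ 0 := by
        exact_mod_cast Nat.cast_ne_zero.mpr (Nat.factorial_ne_zero _)
      have hne2 : ((j : ℂ) + 1) ≠ 0 := Nat.cast_add_one_ne_zero j
      rw [Nat.factorial_succ]
      push_cast [Nat.add_sub_cancel]
      field_simp
    rw [← heq]; exact h1
  have := hexp.sub hsum
  convert this using 1
  · rfl
  · rfl
  simp only [Tm]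
  ring

lemma hasDerivAt_Tm0 (t : ℝ) :
    HasDerivAt (Tm 0) (Complex.I * Complex.exp (t * Complex.I)) t := by
  have heq : Tm 0 = fun s : ℝ => Complex.exp (s * Complex.I) - 1 := by
    funext s; simp [Tm]
  rw [heq]
  have hid : HasDerivAt (fun t : ℝ => (t : ℂ)) 1 t := by
    simpa using (hasDerivAt_id t).ofReal_comp
  have hlin : HasDerivAt (fun t : ℝ => (t : ℂ) * Complex.I) Complex.I t := by
    simpa using hid.mul_const Complex.I
  have hexp : HasDerivAt (fun t : ℝ => Complex.exp (t * Complex.I))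
      (Complex.exp (t * Complex.I) * Complex.I) t := by
    simpa using hlin.cexp
  simpa [mul_comm] using hexp.sub_const 1

lemma norm_I_mul_exp (t : ℝ) : ‖Complex.I * Complex.exp (t * Complex.I)‖ = 1 := by
  rw [norm_mul, Complex.norm_I,
    Complex.norm_exp_ofReal_mul_I, one_mul]

lemma Tm_bound (m : ℕ) (t : ℝ) (ht : 0 ≤ t) :
    ‖Tm m t‖ ≤ t ^ (m + 1) / (Nat.factorial (m + 1)) := by
  induction m generalizing t with
  | zero =>
    have key := image_norm_le_of_norm_deriv_right_le_deriv_boundary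
      (f := Tm 0) (f' := fun s => Complex.I * Complex.exp (s * Complex.I)) (a := 0) (b := t)
      (B := fun s => s) (B' := fun _ => 1) ?_ ?_ ?_ ?_ ?_ (Set.right_mem_Icc.mpr ht)
    · simpa [Nat.factorial] using key
    · exact fun x _ => (hasDerivAt_Tm0 x).continuousAt.continuousWithinAt
    · exact fun x _ => (hasDerivAt_Tm0 x).hasDerivWithinAt
    · simp [Tm_zero]
    · exact fun x => hasDerivAt_id x
    · intro x _
      rw [norm_I_mul_exp]
  | succ n ih =>
    have key := image_norm_le_of_norm_deriv_right_le_deriv_boundary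
      (f := Tm (n + 1)) (f' := fun s => Complex.I * Tm n s) (a := 0) (b := t)
      (B := fun s => s ^ (n + 2) / (Nat.factorial (n + 2)))
      (B' := fun s => s ^ (n + 1) / (Nat.factorial (n + 1))) ?_ ?_ ?_ ?_ ?_
      (Set.right_mem_Icc.mpr ht)
    · exact key
    · exact fun x _ => (hasDerivAt_Tm n x).continuousAt.continuousWithinAt
    · exact fun x _ => (hasDerivAt_Tm n x).hasDerivWithinAt
    · simp [Tm_zero]
    · intro x
      have h1 : HasDerivAt (fun s : ℝ => s ^ (n + 2) / (Nat.factorial (n + 2)))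
          (((n + 2 : ℕ) : ℝ) * x ^ (n + 1) / (Nat.factorial (n + 2))) x := by
        simpa using (hasDerivAt_pow (n + 2) x).div_const (Nat.factorial (n + 2) : ℝ)
      convert h1 using 1
      rw [Nat.factorial_succ (n + 1)]
      push_cast
      have : ((Nat.factorial (n+1)):ℝ) ≠ 0 := by positivity
      field_simp
      ring
    · intro x hx
      have := ih x hx.1
      simpa [norm_mul] using this

lemma Tm_neg (m : ℕ) (t : ℝ) : ‖Tm m (-t)‖ = ‖Tm m t‖ := by
  have : Tm m (-t) = (starRingEnd ℂ) (Tm m t) := by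
    simp only [Tm, map_sub, map_sum, map_div₀, map_pow, map_mul, Complex.conj_ofReal,
      Complex.conj_I, ← Complex.exp_conj, Complex.conj_natCast]
    push_cast
    ring_nf
  rw [this, RCLike.norm_conj]

lemma Tm_bound' (m : ℕ) (t : ℝ) :
    ‖Tm m t‖ ≤ |t| ^ (m + 1) / (Nat.factorial (m + 1)) := by
  rcases le_or_gt 0 t with h | h
  · rw [_root_.abs_of_nonneg h]; exact Tm_bound m t h
  · rw [_root_.abs_of_neg h, ← Tm_neg]
    exact Tm_bound m (-t) (by linarith)

lemma Tm_bound2 (m : ℕ) (t : ℝ) :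
    ‖Tm m t‖ ≤ 2 * |t| ^ m / (Nat.factorial m) := by
  cases m with
  | zero =>
    have h1 : Tm 0 t = Complex.exp (t * Complex.I) - 1 := by simp [Tm]
    rw [h1]
    calc ‖Complex.exp (t * Complex.I) - 1‖ ≤ ‖Complex.exp (t * Complex.I)‖ + ‖(1:ℂ)‖ :=
          norm_sub_le _ _
      _ ≤ 2 * |t| ^ 0 / (Nat.factorial 0) := by
          rw [Complex.norm_exp_ofReal_mul_I]
          norm_num
  | succ n =>
    have h1 : Tm (n + 1) t = Tm n t - (t * Complex.I) ^ (n + 1) / (Nat.factorial (n + 1)) := by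
      simp only [Tm, Finset.sum_range_succ]
      ring
    rw [h1]
    have h2 : ‖((t : ℂ) * Complex.I) ^ (n + 1) / (Nat.factorial (n + 1))‖
        = |t| ^ (n + 1) / (Nat.factorial (n + 1)) := by
      rw [norm_div, norm_pow, norm_mul,
        Complex.norm_I, Complex.norm_real, mul_one]
      simp [abs_of_nonneg (Nat.cast_nonneg _ : (0:ℝ) ≤ _)]
    calc ‖Tm n t - _‖ ≤ ‖Tm n t‖ + ‖((t : ℂ) * Complex.I) ^ (n + 1) / ((Nat.factorial (n + 1) : ℂ))‖ :=
          norm_sub_le _ _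
      _ ≤ |t| ^ (n + 1) / (Nat.factorial (n + 1)) + |t| ^ (n + 1) / (Nat.factorial (n + 1)) := by
          rw [h2]; exact add_le_add_left (Tm_bound' n t) _
      _ = 2 * |t| ^ (n + 1) / (Nat.factorial (n + 1)) := by ring

theorem exp_taylor_bound (α : ℝ) (m : ℕ) (δ : ℝ) (hδ : δ ∈ Set.Icc (0:ℝ) 1) :
    ‖Complex.exp (α * Complex.I) -
      ∑ k ∈ Finset.range (m + 1), (α * Complex.I) ^ k / (Nat.factorial k)‖ ≤
      2 ^ (1 - δ) * |α| ^ ((m : ℝ) + δ) / (Nat.factorial m * ((m : ℝ) + 1) ^ δ) := by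
  obtain ⟨hδ0, hδ1⟩ := hδ
  have hgoal : ‖Tm m α‖ ≤ 2 ^ (1 - δ) * |α| ^ ((m : ℝ) + δ) / (Nat.factorial m * ((m : ℝ) + 1) ^ δ) := by
    rcases eq_or_ne α 0 with rfl | hα0
    · rw [Tm_zero, norm_zero]
      positivity
    · have hα : (0:ℝ) < |α| := abs_pos.mpr hα0
      have hfac : (0:ℝ) < Nat.factorial m := by positivity
      set A := ‖Tm m α‖ with hA
      have hAnn : 0 ≤ A := norm_nonneg _
      set B := 2 * |α| ^ m / (Nat.factorial m) with hBdef
      set C := |α| ^ (m + 1) / (Nat.factorial (m + 1)) with hCdef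
      have hB : A ≤ B := Tm_bound2 m α
      have hC : A ≤ C := Tm_bound' m α
      have hBpos : 0 < B := by positivity
      have hCpos : 0 < C := by positivity
      have key : A ≤ B ^ (1 - δ) * C ^ δ := by
        rcases eq_or_lt_of_le hAnn with h0 | hApos
        · rw [← h0]; positivity
        · calc A = A ^ (1 - δ) * A ^ δ := by
                rw [← Real.rpow_add hApos]; norm_num
            _ ≤ B ^ (1 - δ) * C ^ δ :=
                mul_le_mul (Real.rpow_le_rpow hAnn hB (by linarith))
                  (Real.rpow_le_rpow hAnn hC hδ0) (by positivity) (by positivity)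
      refine key.trans_eq ?_
      have e1 : B ^ (1 - δ) = 2 ^ (1 - δ) * |α| ^ ((m : ℝ) * (1 - δ)) / (Nat.factorial m : ℝ) ^ (1 - δ) := by
        rw [hBdef, Real.div_rpow (by positivity) hfac.le,
          Real.mul_rpow (by norm_num) (by positivity), ← Real.rpow_natCast |α| m,
          ← Real.rpow_mul hα.le]
      have e2 : C ^ δ = |α| ^ (((m : ℝ) + 1) * δ) / (Nat.factorial (m + 1) : ℝ) ^ δ := by
        rw [hCdef, Real.div_rpow (by positivity) (by positivity),
          ← Real.rpow_natCast |α| (m + 1), ← Real.rpow_mul hα.le]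
        push_cast
        ring_nf
      rw [e1, e2]
      have e3 : |α| ^ ((m : ℝ) * (1 - δ)) * |α| ^ (((m : ℝ) + 1) * δ) = |α| ^ ((m : ℝ) + δ) := by
        rw [← Real.rpow_add hα]; ring_nf
      have e4 : (Nat.factorial m : ℝ) ^ (1 - δ) * (Nat.factorial (m + 1) : ℝ) ^ δ
          = Nat.factorial m * ((m : ℝ) + 1) ^ δ := by
        rw [Nat.factorial_succ]
        push_cast
        rw [Real.mul_rpow (by positivity) hfac.le, ← mul_assoc,
          mul_comm ((Nat.factorial m : ℝ) ^ (1 - δ)) _, mul_assoc,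
          mul_comm ((Nat.factorial m : ℝ) ^ (1 - δ)) _, ← Real.rpow_add hfac]
        norm_num
        ring
      rw [div_mul_div_comm, mul_assoc, e3, e4]
  simpa [Tm] using hgoal
end

section
/- Let F be a distribution function on ℝ with characteristic function f(t) = ∫ e^{itx} dF(x), let σ > 0, and set H(x) = F(xσ) - Φ(x), where Φ is the standard normal distribution function. Suppose the pseudomoments μ_k = ∫ x^k dH(x) vanish for k = 3, ..., m (with m ≥ 3) and also μ_0 = μ_1 = μ_2 = 0. Then for all t ∈ ℝ, |f(t/σ) - e^{-t²/2}| ≤ (|t|^{m+1}/(m+1)!)·∫_{|x| ≤ σ√n} |x|^{m+1} |dH|(x) + (2|t|^m/m!)·∫_{|x| > σ√n} |x|^m |dH|(x), for any n ≥ 1. -/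
open MeasureTheory ProbabilityTheory Real
open scoped ENNReal NNReal

/-- Integral of a function against a signed measure, via its Jordan decomposition. -/
noncomputable def signedIntegral (η : SignedMeasure ℝ) (g : ℝ → ℝ) : ℝ :=
  (∫ x, g x ∂η.toJordanDecomposition.posPart) - ∫ x, g x ∂η.toJordanDecomposition.negPart

lemma measure_add_eq_of_toSignedMeasure (a b c d : Measure ℝ)
    [IsFiniteMeasure a] [IsFiniteMeasure b] [IsFiniteMeasure c] [IsFiniteMeasure d]
    (h : a.toSignedMeasure - b.toSignedMeasure = c.toSignedMeasure - d.toSignedMeasure) :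
    a + d = c + b := by
  ext s hs
  have h' := congrArg (fun v : SignedMeasure ℝ => v s) h
  simp only [MeasureTheory.VectorMeasure.sub_apply,
    Measure.toSignedMeasure_apply_measurable hs] at h'
  have h2 : ((a + d) s).toReal = ((c + b) s).toReal := by
    rw [Measure.add_apply, Measure.add_apply, ENNReal.toReal_add (measure_ne_top _ _)
      (measure_ne_top _ _), ENNReal.toReal_add (measure_ne_top _ _) (measure_ne_top _ _)]
    simp only [Measure.real] at h'
    linarith
  exact (ENNReal.toReal_eq_toReal_iff' (measure_ne_top _ _) (measure_ne_top _ _)).mp h2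

lemma integral_sub_eq_of_measure_add (a b c d : Measure ℝ) (g : ℝ → ℂ)
    (h : a + d = c + b) (ha : Integrable g a) (hb : Integrable g b)
    (hc : Integrable g c) (hd : Integrable g d) :
    (∫ x, g x ∂a) - ∫ x, g x ∂b = (∫ x, g x ∂c) - ∫ x, g x ∂d := by
  have h1 : (∫ x, g x ∂a) + ∫ x, g x ∂d = (∫ x, g x ∂c) + ∫ x, g x ∂b := by
    rw [← integral_add_measure ha hd, ← integral_add_measure hc hb, h]
  linear_combination h1

section Taylor
open Complex Finset

noncomputable def expRem (N : ℕ) (y : ℝ) : ℂ :=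
  Complex.exp (y * Complex.I) - ∑ k ∈ Finset.range N, (y * Complex.I) ^ k / k.factorial

lemma expRem_zero_y (N : ℕ) : expRem (N + 1) 0 = 0 := by
  simp [expRem, Finset.sum_range_succ']

noncomputable def expRemC (N : ℕ) (w : ℂ) : ℂ :=
  Complex.exp w - ∑ k ∈ Finset.range N, w ^ k / k.factorial

lemma hasDerivAt_expRemC (N : ℕ) (w : ℂ) :
    HasDerivAt (expRemC (N + 1)) (expRemC N w) w := by
  have hsum : HasDerivAt (fun z : ℂ => ∑ k ∈ Finset.range (N + 1), z ^ k / k.factorial)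
      (∑ k ∈ Finset.range N, w ^ k / k.factorial) w := by
    have h : HasDerivAt (fun z : ℂ => ∑ k ∈ Finset.range (N + 1), z ^ k / k.factorial)
        (∑ k ∈ Finset.range (N + 1), (k : ℂ) * w ^ (k - 1) / k.factorial) w := by
      refine HasDerivAt.fun_sum fun k _ => ?_
      simpa [div_eq_mul_inv, mul_comm, mul_assoc, mul_left_comm] using
        (hasDerivAt_pow k w).div_const (k.factorial : ℂ)
    convert h using 1
    rw [Finset.sum_range_succ']
    simp only [Nat.cast_zero, Nat.factorial_zero, Nat.cast_one, zero_mul, zero_div, add_zero]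
    refine Finset.sum_congr rfl fun k _ => ?_
    rw [Nat.factorial_succ, Nat.add_sub_cancel]
    push_cast
    have hk : ((k : ℂ) + 1) ≠ 0 := Nat.cast_add_one_ne_zero k
    rw [mul_comm ((k : ℂ) + 1), mul_div_assoc, div_mul_cancel_left₀ hk, div_eq_mul_inv]
  exact (Complex.hasDerivAt_exp w).fun_sub hsum

lemma hasDerivAt_expRem (N : ℕ) (y : ℝ) :
    HasDerivAt (expRem (N + 1)) (Complex.I * expRem N y) y := by
  have hinner : HasDerivAt (fun x : ℝ => (x : ℂ) * Complex.I) Complex.I y := by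
    simpa using ((hasDerivAt_id ((y : ℝ) : ℂ)).mul_const Complex.I).comp_ofReal
  have h := (hasDerivAt_expRemC N ((y : ℂ) * Complex.I)).comp y hinner
  have : expRem (N + 1) = expRemC (N + 1) ∘ fun x : ℝ => (x : ℂ) * Complex.I := by
    ext x; simp [expRem, expRemC, Function.comp]
  rw [this]
  refine h.congr_deriv ?_
  simp [expRem, expRemC]
  ring

lemma continuous_expRem (N : ℕ) : Continuous (expRem N) := by
  unfold expRem
  fun_prop

lemma norm_expRem_le_nonneg (N : ℕ) : ∀ y : ℝ, 0 ≤ y →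
    ‖expRem N y‖ ≤ y ^ N / N.factorial := by
  induction N with
  | zero =>
    intro y hy
    simp only [expRem, Finset.range_zero, Finset.sum_empty, sub_zero, pow_zero,
      Nat.factorial_zero, Nat.cast_one, div_one]
    rw [Complex.norm_exp]
    simp
  | succ N ih =>
    intro y hy
    have hftc : expRem (N + 1) y - expRem (N + 1) 0 =
        ∫ s in (0:ℝ)..y, Complex.I * expRem N s := by
      refine (intervalIntegral.integral_eq_sub_of_hasDerivAt
        (fun s _ => hasDerivAt_expRem N s) ?_).symm
      exact ((continuous_const.mul (continuous_expRem N)).intervalIntegrable 0 y)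
    rw [show expRem (N+1) y = expRem (N+1) y - expRem (N+1) 0 by rw [expRem_zero_y]; ring]
    rw [hftc]
    calc ‖∫ s in (0:ℝ)..y, Complex.I * expRem N s‖
        ≤ ∫ s in (0:ℝ)..y, ‖Complex.I * expRem N s‖ := by
          simpa using intervalIntegral.norm_integral_le_integral_norm
            (f := fun s => Complex.I * expRem N s) (μ := volume) hy
      _ ≤ ∫ s in (0:ℝ)..y, s ^ N / N.factorial := by
          refine intervalIntegral.integral_mono_on hy ?_ ?_ ?_
          · exact ((continuous_const.mul (continuous_expRem N)).norm.intervalIntegrable 0 y)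
          · exact (Continuous.intervalIntegrable (by fun_prop) 0 y)
          · intro s hs
            rw [norm_mul]
            simpa using ih s hs.1
      _ = y ^ (N + 1) / (N + 1).factorial := by
          rw [intervalIntegral.integral_div, integral_pow]
          rw [Nat.factorial_succ]
          push_cast
          field_simp
          simp

lemma expRem_neg (N : ℕ) (y : ℝ) : expRem N (-y) = starRingEnd ℂ (expRem N y) := by
  simp only [expRem, map_sub, map_sum, map_div₀, map_pow, map_mul, Complex.conj_I,
    Complex.conj_ofReal, ← Complex.exp_conj, Complex.conj_natCast]
  push_cast
  ring_nf

lemma norm_expRem_le (N : ℕ) (y : ℝ) :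
    ‖expRem N y‖ ≤ |y| ^ N / N.factorial := by
  rcases le_total 0 y with hy | hy
  · rw [_root_.abs_of_nonneg hy]; exact norm_expRem_le_nonneg N y hy
  · rw [_root_.abs_of_nonpos hy]
    have := norm_expRem_le_nonneg N (-y) (by linarith)
    rwa [expRem_neg, Complex.norm_conj] at this

lemma norm_expRem_le' (N : ℕ) (y : ℝ) :
    ‖expRem (N + 1) y‖ ≤ 2 * |y| ^ N / N.factorial := by
  have h1 : expRem (N + 1) y = expRem N y - (y * Complex.I) ^ N / N.factorial := by
    simp [expRem, Finset.sum_range_succ]; ring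
  rw [h1]
  calc ‖expRem N y - (y * Complex.I) ^ N / N.factorial‖
      ≤ ‖expRem N y‖ + ‖(y * Complex.I) ^ N / N.factorial‖ :=
        norm_sub_le _ _
    _ ≤ |y| ^ N / N.factorial + |y| ^ N / N.factorial := by
        gcongr
        · exact norm_expRem_le N y
        · rw [norm_div, norm_pow, norm_mul]
          simp
    _ = 2 * |y| ^ N / N.factorial := by ring

end Taylor

section Gauss
open Complex Real

lemma charfun_gaussian (t : ℝ) :
    ∫ x : ℝ, Complex.exp ((t : ℂ) * x * Complex.I) ∂(gaussianReal 0 1) =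
      Complex.exp (-(t : ℂ) ^ 2 / 2) := by
  rw [gaussianReal_of_var_ne_zero 0 one_ne_zero]
  have hmeas : Measurable fun x : ℝ => (gaussianPDFReal 0 1 x).toNNReal :=
    (measurable_gaussianPDFReal 0 1).real_toNNReal
  have hwd : (volume : Measure ℝ).withDensity (gaussianPDF 0 1) =
      (volume : Measure ℝ).withDensity (fun x => ((gaussianPDFReal 0 1 x).toNNReal : ℝ≥0∞)) := rfl
  rw [hwd, integral_withDensity_eq_integral_smul hmeas]
  have hpt : ∀ x : ℝ, (gaussianPDFReal 0 1 x).toNNReal • Complex.exp ((t : ℂ) * x * Complex.I) =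
      ((Real.sqrt (2 * π))⁻¹ : ℂ) *
        Complex.exp ((-(1/2) : ℂ) * x ^ 2 + ((t : ℂ) * Complex.I) * x + 0) := by
    intro x
    rw [NNReal.smul_def, Real.coe_toNNReal _ (gaussianPDFReal_nonneg 0 1 x)]
    rw [Complex.real_smul]
    rw [gaussianPDFReal]
    push_cast
    rw [mul_assoc, ← Complex.exp_add]
    have h21 : (2 * π * 1) = 2 * π := by ring
    rw [h21]
    congr 1
    push_cast
    ring
  simp_rw [hpt]
  rw [integral_const_mul, integral_cexp_quadratic (by norm_num : ((-(1/2):ℂ)).re < 0)]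
  have h1 : ((π : ℂ) / -(-(1/2)) : ℂ) = ((2 * π : ℝ) : ℂ) := by push_cast; field_simp
  rw [h1]
  have h2 : (((2 * π : ℝ) : ℂ)) ^ ((1:ℂ)/2) = ((Real.sqrt (2 * π) : ℝ) : ℂ) := by
    rw [show ((1:ℂ)/2) = ((1/2 : ℝ) : ℂ) by norm_num]
    rw [← Complex.ofReal_cpow (by positivity)]
    norm_num [← Real.sqrt_eq_rpow]
  rw [h2]
  have h3 : (0 : ℂ) - ((t:ℂ) * Complex.I)^2 / (4 * (-(1/2))) = -(t:ℂ)^2/2 := by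
    rw [mul_pow, Complex.I_sq]
    ring
  rw [h3, ← mul_assoc]
  have h4 : ((Real.sqrt (2 * π))⁻¹ : ℂ) * ((Real.sqrt (2 * π) : ℝ) : ℂ) = 1 := by
    rw [← Complex.ofReal_inv, ← Complex.ofReal_mul, inv_mul_cancel₀]
    · norm_num
    · positivity
  rw [h4, one_mul]

end Gauss

theorem charfun_pseudomoment_bound
    (μ : Measure ℝ) [IsProbabilityMeasure μ] (σ : ℝ) (hσ : 0 < σ)
    (m : ℕ) (hm : 3 ≤ m)
    -- H is the signed measure with "distribution function" H(x) = F(xσ) - Φ(x)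
    (η : SignedMeasure ℝ)
    (hη : η = (μ.map (· / σ)).toSignedMeasure - (gaussianReal 0 1).toSignedMeasure)
    (h_int : ∀ k ≤ m + 1, Integrable (fun x => |x| ^ k) η.totalVariation)
    (h_pseudo : ∀ k ≤ m, signedIntegral η (fun x => x ^ k) = 0)
    (n : ℕ) (hn : 1 ≤ n) :
    ∀ t : ℝ,
      ‖(∫ x, Complex.exp (((t / σ : ℝ) : ℂ) * x * Complex.I) ∂μ) -
          Complex.exp (-(t : ℂ) ^ 2 / 2)‖ ≤
        |t| ^ (m + 1) / (Nat.factorial (m + 1)) *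
            (∫ x in {x : ℝ | |x| ≤ σ * Real.sqrt n}, |x| ^ (m + 1) ∂η.totalVariation) +
          2 * |t| ^ m / (Nat.factorial m) *
            (∫ x in {x : ℝ | σ * Real.sqrt n < |x|}, |x| ^ m ∂η.totalVariation) := by
  intro t
  have hmeasmap : Measurable fun x : ℝ => x / σ := measurable_id.div_const σ
  set γ : Measure ℝ := gaussianReal 0 1 with hγ
  set μ' : Measure ℝ := μ.map (· / σ) with hμ'
  have : IsProbabilityMeasure μ' := Measure.isProbabilityMeasure_map hmeasmap.aemeasurable
  set P : Measure ℝ := η.toJordanDecomposition.posPart with hP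
  set Nm : Measure ℝ := η.toJordanDecomposition.negPart with hNm
  have hTV : η.totalVariation = P + Nm := rfl
  -- the measure identity μ' + Nm = P + γ
  have hsm : μ'.toSignedMeasure - γ.toSignedMeasure = P.toSignedMeasure - Nm.toSignedMeasure := by
    conv_lhs => rw [← hη, ← η.toSignedMeasure_toJordanDecomposition]
    rfl
  have hmeq : μ' + Nm = P + γ := measure_add_eq_of_toSignedMeasure _ _ _ _ hsm
  -- integrability facts
  have hakP : ∀ k ≤ m + 1, Integrable (fun x => |x| ^ k) P :=
    fun k hk => (h_int k hk).mono_measure (hTV ▸ Measure.le_add_right le_rfl)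
  have hakN : ∀ k ≤ m + 1, Integrable (fun x => |x| ^ k) Nm :=
    fun k hk => (h_int k hk).mono_measure (hTV ▸ Measure.le_add_left le_rfl)
  have hxC : ∀ (ν : Measure ℝ), (∀ k ≤ m + 1, Integrable (fun x => |x| ^ k) ν) →
      ∀ k ≤ m + 1, Integrable (fun x : ℝ => (x : ℂ) ^ k) ν := by
    intro ν hν k hk
    refine (hν k hk).mono' ((Complex.continuous_ofReal.pow k).aestronglyMeasurable) ?_
    filter_upwards with x
    simp
  have hexp : ∀ (ν : Measure ℝ), IsFiniteMeasure ν →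
      Integrable (fun x : ℝ => Complex.exp ((t : ℂ) * x * Complex.I)) ν := by
    intro ν hν
    refine (integrable_const (1 : ℝ)).mono'
      ((Complex.continuous_exp.comp (by fun_prop)).aestronglyMeasurable) ?_
    filter_upwards with x
    rw [Complex.norm_exp]
    simp [Complex.mul_re, Complex.mul_im]
  -- change of variables for the characteristic function
  have hmap : ∫ x, Complex.exp ((t : ℂ) * x * Complex.I) ∂μ'
      = ∫ x, Complex.exp (((t / σ : ℝ) : ℂ) * x * Complex.I) ∂μ := by
    have hfc : Continuous fun x : ℝ => Complex.exp ((t : ℂ) * x * Complex.I) := by fun_prop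
    rw [hμ', integral_map hmeasmap.aemeasurable hfc.aestronglyMeasurable]
    congr 1 with x
    congr 1
    push_cast
    ring
  -- the main identity
  have hid : (∫ x, Complex.exp (((t / σ : ℝ) : ℂ) * x * Complex.I) ∂μ) -
        Complex.exp (-(t : ℂ) ^ 2 / 2)
      = (∫ x, Complex.exp ((t : ℂ) * x * Complex.I) ∂P) -
        ∫ x, Complex.exp ((t : ℂ) * x * Complex.I) ∂Nm := by
    rw [← hmap, ← charfun_gaussian t]
    exact integral_sub_eq_of_measure_add μ' γ P Nm _ hmeq (hexp μ' inferInstance)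
      (hexp γ inferInstance) (hexp P inferInstance) (hexp Nm inferInstance)
  -- vanishing pseudomoments, complex version
  have hz : ∀ k ≤ m, (∫ x, (x : ℂ) ^ k ∂P) = ∫ x, (x : ℂ) ^ k ∂Nm := by
    intro k hk
    have h0 := h_pseudo k hk
    unfold signedIntegral at h0
    have e : ∀ ν : Measure ℝ, ∫ x, (x : ℂ) ^ k ∂ν = ((∫ x, x ^ k ∂ν : ℝ) : ℂ) := by
      intro ν
      have hcast : ∀ x : ℝ, (x : ℂ) ^ k = ((x ^ k : ℝ) : ℂ) := fun x => by push_cast; ring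
      simp_rw [hcast]
      exact integral_ofReal
    rw [e, e]
    rw [sub_eq_zero] at h0
    rw [hP, hNm, h0]
  -- the remainder function
  set R : ℝ → ℂ := fun x => expRem (m + 1) (t * x) with hRdef
  have hgR : ∀ x : ℝ, R x = Complex.exp ((t : ℂ) * x * Complex.I) -
      ∑ k ∈ Finset.range (m + 1),
        ((t : ℂ) * Complex.I) ^ k / k.factorial * (x : ℂ) ^ k := by
    intro x
    simp only [hRdef, expRem]
    congr 1
    · congr 1; push_cast; ring
    · refine Finset.sum_congr rfl fun k _ => ?_
      push_cast
      ring
  have hpolyint : ∀ (ν : Measure ℝ), (∀ k ≤ m + 1, Integrable (fun x : ℝ => (x : ℂ) ^ k) ν) →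
      Integrable (fun x : ℝ => ∑ k ∈ Finset.range (m + 1),
        ((t : ℂ) * Complex.I) ^ k / k.factorial * (x : ℂ) ^ k) ν :=
    fun ν hν => integrable_finset_sum _ fun k hk =>
      (hν k (le_of_lt (Finset.mem_range.mp hk))).const_mul _
  have hint_R : ∀ (ν : Measure ℝ), IsFiniteMeasure ν →
      (∀ k ≤ m + 1, Integrable (fun x : ℝ => (x : ℂ) ^ k) ν) →
      ∫ x, R x ∂ν = (∫ x, Complex.exp ((t : ℂ) * x * Complex.I) ∂ν) -
        ∑ k ∈ Finset.range (m + 1),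
          ((t : ℂ) * Complex.I) ^ k / k.factorial * ∫ x, (x : ℂ) ^ k ∂ν := by
    intro ν hfin hν
    simp_rw [hgR]
    rw [integral_sub (hexp ν hfin) (hpolyint ν hν),
      integral_finset_sum _ (fun k hk =>
        (hν k (le_of_lt (Finset.mem_range.mp hk))).const_mul _)]
    simp_rw [MeasureTheory.integral_const_mul]
  have hsub : (∫ x, Complex.exp ((t : ℂ) * x * Complex.I) ∂P) -
        ∫ x, Complex.exp ((t : ℂ) * x * Complex.I) ∂Nm
      = (∫ x, R x ∂P) - ∫ x, R x ∂Nm := by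
    rw [hint_R P inferInstance (hxC P hakP), hint_R Nm inferInstance (hxC Nm hakN)]
    have hzero : ∑ k ∈ Finset.range (m + 1),
          ((t : ℂ) * Complex.I) ^ k / k.factorial * ∫ x, (x : ℂ) ^ k ∂P
        = ∑ k ∈ Finset.range (m + 1),
          ((t : ℂ) * Complex.I) ^ k / k.factorial * ∫ x, (x : ℂ) ^ k ∂Nm := by
      refine Finset.sum_congr rfl fun k hk => ?_
      rw [hz k (Nat.lt_succ_iff.mp (Finset.mem_range.mp hk))]
    rw [hzero]
    ring
  -- bounds on the remainder
  have hRbound : ∀ x : ℝ, ‖R x‖ ≤ 2 * |t| ^ m / m.factorial * |x| ^ m := by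
    intro x
    calc ‖R x‖ ≤ 2 * |t * x| ^ m / m.factorial := norm_expRem_le' m (t * x)
      _ = 2 * |t| ^ m / m.factorial * |x| ^ m := by rw [abs_mul, mul_pow]; ring
  have hRbound' : ∀ x : ℝ,
      ‖R x‖ ≤ |t| ^ (m + 1) / (m + 1).factorial * |x| ^ (m + 1) := by
    intro x
    calc ‖R x‖ ≤ |t * x| ^ (m + 1) / (m + 1).factorial :=
          norm_expRem_le (m + 1) (t * x)
      _ = |t| ^ (m + 1) / (m + 1).factorial * |x| ^ (m + 1) := by
          rw [abs_mul, mul_pow]; ring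
  have hRcont : Continuous fun x : ℝ => ‖R x‖ :=
    continuous_norm.comp ((continuous_expRem (m + 1)).comp (continuous_const.mul
      continuous_id))
  have hRint : ∀ ν : Measure ℝ, Integrable (fun x => |x| ^ m) ν →
      Integrable (fun x => ‖R x‖) ν := by
    intro ν hν
    refine (hν.const_mul (2 * |t| ^ m / m.factorial)).mono'
      hRcont.aestronglyMeasurable ?_
    filter_upwards with x
    rw [Real.norm_eq_abs, abs_of_nonneg (norm_nonneg _)]
    exact hRbound x
  have hRtv : Integrable (fun x => ‖R x‖) η.totalVariation :=
    hRint _ (h_int m (by omega))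
  have hRp : Integrable (fun x => ‖R x‖) P := hRint _ (hakP m (by omega))
  have hRn : Integrable (fun x => ‖R x‖) Nm := hRint _ (hakN m (by omega))
  -- norm bound through total variation
  have hnorm : ‖(∫ x, R x ∂P) - ∫ x, R x ∂Nm‖
      ≤ ∫ x, ‖R x‖ ∂η.totalVariation := by
    rw [hTV, integral_add_measure hRp hRn]
    calc ‖(∫ x, R x ∂P) - ∫ x, R x ∂Nm‖
        ≤ ‖∫ x, R x ∂P‖ + ‖∫ x, R x ∂Nm‖ :=
          norm_sub_le _ _
      _ ≤ (∫ x, ‖R x‖ ∂P) + ∫ x, ‖R x‖ ∂Nm := by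
          gcongr
          · simpa using
              norm_integral_le_integral_norm (f := R) (μ := P)
          · simpa using
              norm_integral_le_integral_norm (f := R) (μ := Nm)
  -- split the integral
  set S : Set ℝ := {x : ℝ | |x| ≤ σ * Real.sqrt n} with hSdef
  have hSm : MeasurableSet S := measurableSet_le (by fun_prop) measurable_const
  have hcompl : {x : ℝ | σ * Real.sqrt n < |x|} = Sᶜ := by
    ext x; simp [hSdef, not_le]
  have hsplit : ∫ x, ‖R x‖ ∂η.totalVariation
      = (∫ x in S, ‖R x‖ ∂η.totalVariation) +
        ∫ x in Sᶜ, ‖R x‖ ∂η.totalVariation :=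
    (integral_add_compl hSm hRtv).symm
  have hb1 : ∫ x in S, ‖R x‖ ∂η.totalVariation
      ≤ |t| ^ (m + 1) / (Nat.factorial (m + 1)) *
        ∫ x in S, |x| ^ (m + 1) ∂η.totalVariation := by
    rw [← integral_const_mul]
    exact setIntegral_mono_on hRtv.integrableOn
      (((h_int (m + 1) le_rfl).const_mul _).integrableOn) hSm fun x _ => hRbound' x
  have hb2 : ∫ x in Sᶜ, ‖R x‖ ∂η.totalVariation
      ≤ 2 * |t| ^ m / (Nat.factorial m) *
        ∫ x in Sᶜ, |x| ^ m ∂η.totalVariation := by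
    rw [← integral_const_mul]
    exact setIntegral_mono_on hRtv.integrableOn
      (((h_int m (by omega)).const_mul _).integrableOn) hSm.compl fun x _ => hRbound x
  rw [hid, hsub, hcompl]
  calc ‖(∫ x, R x ∂P) - ∫ x, R x ∂Nm‖
      ≤ ∫ x, ‖R x‖ ∂η.totalVariation := hnorm
    _ = (∫ x in S, ‖R x‖ ∂η.totalVariation) +
        ∫ x in Sᶜ, ‖R x‖ ∂η.totalVariation := hsplit
    _ ≤ _ := add_le_add hb1 hb2
end

section
/- Let f be a characteristic function satisfying |f(t/σ)| ≤ e^{-t²/6} for all |t| ≤ T₁, and |f(t/σ) - e^{-t²/2}| ≤ ω(t) for all t, where ω(t) = (|t|^{m+1}/(m+1)!)ν₁ + (2|t|^m/m!)ν₂. Then for n ≥ 2 and |t| ≤ T₁√n, |f^n(t/(σ√n)) - e^{-t²/2}| ≤ e^{-t²/12} · ( |t|^{m+1} ν₁ /((m+1)! n^{(m-1)/2}) + 2|t|^m ν₂ /(m! n^{(m-2)/2}) ). -/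
open Real

lemma aux_abs_pow_sub_pow (a b : ℂ) (r : ℝ) (n : ℕ)
    (ha : ‖a‖ ≤ r) (hb : ‖b‖ ≤ r) :
    ‖a ^ n - b ^ n‖ ≤ n * r ^ (n - 1) * ‖a - b‖ := by
  have hr : 0 ≤ r := le_trans (norm_nonneg a) ha
  rw [← geom_sum₂_mul a b n, norm_mul]
  have hsum : ‖∑ i ∈ Finset.range n, a ^ i * b ^ (n - 1 - i)‖ ≤ n * r ^ (n - 1) := by
    calc ‖∑ i ∈ Finset.range n, a ^ i * b ^ (n - 1 - i)‖
        ≤ ∑ i ∈ Finset.range n, ‖a ^ i * b ^ (n - 1 - i)‖ :=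
          norm_sum_le _ _
      _ ≤ ∑ _i ∈ Finset.range n, r ^ (n - 1) := by
          apply Finset.sum_le_sum
          intro i hi
          have hi' : i < n := Finset.mem_range.mp hi
          have hile : i ≤ n - 1 := Nat.le_sub_one_of_lt hi'
          rw [norm_mul, norm_pow, norm_pow]
          calc ‖a‖ ^ i * ‖b‖ ^ (n - 1 - i)
              ≤ r ^ i * r ^ (n - 1 - i) :=
                mul_le_mul (pow_le_pow_left₀ (norm_nonneg a) ha i)
                  (pow_le_pow_left₀ (norm_nonneg b) hb _) (by positivity) (by positivity)
            _ = r ^ (n - 1) := by rw [← pow_add, Nat.add_sub_cancel' hile]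
      _ = n * r ^ (n - 1) := by rw [Finset.sum_const, Finset.card_range, nsmul_eq_mul]
  exact mul_le_mul_of_nonneg_right hsum (norm_nonneg _)

lemma aux_rpow (x : ℝ) (hx : 0 < x) (k : ℕ) :
    x ^ (((k : ℝ) - 2) / 2) * x = Real.sqrt x ^ k := by
  have h1 : x ^ (((k : ℝ) - 2) / 2) * x = x ^ ((((k : ℝ) - 2) / 2) + 1) := by
    rw [Real.rpow_add hx, Real.rpow_one]
  rw [h1, Real.sqrt_eq_rpow, ← Real.rpow_natCast (x ^ ((1:ℝ)/2)) k,
    ← Real.rpow_mul hx.le]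
  congr 1
  ring

theorem power_charfun_bound
    (f : ℝ → ℂ) (σ : ℝ) (hσ : 0 < σ) (T₁ : ℝ) (hT₁ : 1 ≤ T₁)
    (m : ℕ) (hm : 3 ≤ m) (ν₁ ν₂ : ℝ) (hν₁ : 0 ≤ ν₁) (hν₂ : 0 ≤ ν₂)
    (hbound : ∀ t : ℝ, |t| ≤ T₁ → ‖f (t / σ)‖ ≤ Real.exp (-t ^ 2 / 6))
    (hom : ∀ t : ℝ, ‖f (t / σ) - Complex.exp (-(t : ℂ) ^ 2 / 2)‖ ≤
        |t| ^ (m + 1) / (Nat.factorial (m + 1)) * ν₁ + 2 * |t| ^ m / (Nat.factorial m) * ν₂)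
    (n : ℕ) (hn : 2 ≤ n) :
    ∀ t : ℝ, |t| ≤ T₁ * Real.sqrt n →
      ‖(f (t / (σ * Real.sqrt n))) ^ n - Complex.exp (-(t : ℂ) ^ 2 / 2)‖ ≤
        Real.exp (-t ^ 2 / 12) *
          (|t| ^ (m + 1) * ν₁ / (Nat.factorial (m + 1) * (n : ℝ) ^ (((m : ℝ) - 1) / 2)) +
            2 * |t| ^ m * ν₂ / (Nat.factorial m * (n : ℝ) ^ (((m : ℝ) - 2) / 2))) := by
  intro t ht
  have npos : (0:ℝ) < n := by exact_mod_cast lt_of_lt_of_le (by norm_num) hn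
  have hsq : (0:ℝ) < Real.sqrt n := Real.sqrt_pos.mpr npos
  set s : ℝ := t / Real.sqrt n with hs
  have hsσ : t / (σ * Real.sqrt n) = s / σ := by
    rw [hs, div_div, mul_comm]
  have habs_s : |s| = |t| / Real.sqrt n := by
    rw [hs, abs_div, abs_of_pos hsq]
  have hsle : |s| ≤ T₁ := by
    rw [habs_s, div_le_iff₀ hsq]; exact ht
  have hs2 : s ^ 2 * n = t ^ 2 := by
    rw [hs, div_pow, Real.sq_sqrt npos.le]
    field_simp
  -- b and its n-th power
  set b : ℂ := Complex.exp (-(s : ℂ) ^ 2 / 2) with hb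
  have hbn : b ^ n = Complex.exp (-(t : ℂ) ^ 2 / 2) := by
    rw [hb, ← Complex.exp_nat_mul]
    congr 1
    have : ((s:ℂ)) ^ 2 * n = (t:ℂ) ^ 2 := by exact_mod_cast congrArg (Complex.ofReal) hs2
    field_simp
    linear_combination (-1 : ℂ) * this
  -- bound on |a|, |b|
  set a : ℂ := f (s / σ) with ha
  have haR : ‖a‖ ≤ Real.exp (-s ^ 2 / 6) := hbound s hsle
  have hbabs : ‖b‖ = Real.exp (-s ^ 2 / 2) := by
    have hcast : (-(s:ℂ) ^ 2 / 2) = ((-s ^ 2 / 2 : ℝ) : ℂ) := by push_cast; ring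
    rw [hb, hcast, Complex.norm_exp_ofReal]
  have hbR : ‖b‖ ≤ Real.exp (-s ^ 2 / 6) := by
    rw [hbabs]
    apply Real.exp_le_exp.mpr
    nlinarith [sq_nonneg s]
  -- power difference bound
  have hkey := aux_abs_pow_sub_pow a b (Real.exp (-s ^ 2 / 6)) n haR hbR
  rw [hbn] at hkey
  rw [hsσ, ← ha]
  -- bound the exponential factor
  have hexp : Real.exp (-s ^ 2 / 6) ^ (n - 1) ≤ Real.exp (-t ^ 2 / 12) := by
    rw [← Real.exp_nat_mul]
    apply Real.exp_le_exp.mpr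
    have hc : ((n - 1 : ℕ) : ℝ) = (n : ℝ) - 1 := by
      rw [Nat.cast_sub (by omega)]; norm_num
    rw [hc, ← hs2]
    have h2n : (2:ℝ) ≤ n := by exact_mod_cast hn
    nlinarith [mul_nonneg (sq_nonneg s) (by linarith : (0:ℝ) ≤ (n:ℝ) - 2)]
  -- omega bound
  have hom' := hom s
  rw [← ha] at hom'
  -- the arithmetic identity
  have hP : (n:ℝ) ^ (((m:ℝ) - 1) / 2) * n = Real.sqrt n ^ (m + 1) := by
    have := aux_rpow n npos (m + 1)
    rw [show (((m + 1 : ℕ) : ℝ) - 2) / 2 = ((m:ℝ) - 1) / 2 by push_cast; ring] at this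
    exact this
  have hQ : (n:ℝ) ^ (((m:ℝ) - 2) / 2) * n = Real.sqrt n ^ m := aux_rpow n npos m
  have hPpos : (0:ℝ) < (n:ℝ) ^ (((m:ℝ) - 1) / 2) := Real.rpow_pos_of_pos npos _
  have hQpos : (0:ℝ) < (n:ℝ) ^ (((m:ℝ) - 2) / 2) := Real.rpow_pos_of_pos npos _
  have hfac1 : (0:ℝ) < (Nat.factorial (m + 1) : ℝ) := by
    exact_mod_cast Nat.factorial_pos _
  have hfac2 : (0:ℝ) < (Nat.factorial m : ℝ) := by exact_mod_cast Nat.factorial_pos _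
  have hid : (n:ℝ) * (|s| ^ (m + 1) / (Nat.factorial (m + 1)) * ν₁ +
      2 * |s| ^ m / (Nat.factorial m) * ν₂) =
      |t| ^ (m + 1) * ν₁ / (Nat.factorial (m + 1) * (n : ℝ) ^ (((m : ℝ) - 1) / 2)) +
        2 * |t| ^ m * ν₂ / (Nat.factorial m * (n : ℝ) ^ (((m : ℝ) - 2) / 2)) := by
    rw [habs_s, div_pow, div_pow, ← hP, ← hQ]
    field_simp
  calc ‖a ^ n - Complex.exp (-(t : ℂ) ^ 2 / 2)‖
      ≤ n * Real.exp (-s ^ 2 / 6) ^ (n - 1) * ‖a - b‖ := hkey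
    _ ≤ n * Real.exp (-t ^ 2 / 12) *
        (|s| ^ (m + 1) / (Nat.factorial (m + 1)) * ν₁ +
          2 * |s| ^ m / (Nat.factorial m) * ν₂) := by
        have h1 : (n:ℝ) * Real.exp (-s ^ 2 / 6) ^ (n - 1) ≤ n * Real.exp (-t ^ 2 / 12) :=
          mul_le_mul_of_nonneg_left hexp npos.le
        apply mul_le_mul h1 hom' (norm_nonneg _)
        positivity
    _ = Real.exp (-t ^ 2 / 12) *
          (|t| ^ (m + 1) * ν₁ / (Nat.factorial (m + 1) * (n : ℝ) ^ (((m : ℝ) - 1) / 2)) +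
            2 * |t| ^ m * ν₂ / (Nat.factorial m * (n : ℝ) ^ (((m : ℝ) - 2) / 2))) := by
        rw [← hid]; ring
end

section
/- Let a random variable have density p(x) bounded by d < ∞ and variance σ², with characteristic function f. Then for all t ∈ ℝ, |f(t)| ≤ exp( -t² / (96 d² (2σ|t| + π)²) ). -/
open Real MeasureTheory Complex

lemma stat_cos_lb (t s u : ℝ) (ht : 0 < t) (hs : 0 ≤ s) (hts : t * s ≤ π)
    (hu : ∀ k : ℤ, s < |u - k * (2 * π / t)|) :
    2 / π ^ 2 * (t * s) ^ 2 ≤ 1 - Real.cos (t * u) := by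
  set k : ℤ := round (t * u / (2 * π)) with hk
  have hπ := Real.pi_pos
  set X : ℝ := t * u - k * (2 * π) with hX
  have h1 : |X| ≤ π := by
    have h0 := abs_sub_round (t * u / (2 * π))
    have h2 : t * u / (2 * π) - (k:ℝ) = X / (2 * π) := by rw [hX]; field_simp
    rw [h2, abs_div, abs_of_pos (by linarith : (0:ℝ) < 2*π), div_le_iff₀ (by linarith : (0:ℝ) < 2*π)] at h0
    linarith
  have hcos : Real.cos (t * u) = Real.cos X := by
    rw [hX, Real.cos_sub_int_mul_two_pi]
  have h3 : t * s ≤ |X| := by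
    have h4 : X = t * (u - k * (2 * π / t)) := by rw [hX]; field_simp
    rw [h4, abs_mul, abs_of_pos ht]
    exact mul_le_mul_of_nonneg_left (hu k).le ht.le
  have h5 := Real.cos_le_one_sub_mul_cos_sq h1
  have h6 : (t*s)^2 ≤ X^2 := by
    rw [← _root_.sq_abs X]
    exact pow_le_pow_left₀ (by positivity) h3 2
  have h7 : 2 / π ^ 2 * (t*s)^2 ≤ 2 / π ^ 2 * X^2 := by
    apply mul_le_mul_of_nonneg_left h6 (by positivity)
  rw [hcos]; linarith

lemma stat_dsig (p : ℝ → ℝ) (d σ μ1 : ℝ) (hd : 0 < d) (hσ : 0 < σ) (hp : Integrable p)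
    (hnn : ∀ x, 0 ≤ p x) (h1 : ∫ x, p x = 1) (hbd : ∀ x, p x ≤ d)
    (hvint : Integrable (fun x => (x - μ1)^2 * p x)) (hv : ∫ x, (x - μ1)^2 * p x = σ^2) :
    3/16 ≤ d * σ := by
  set S : Set ℝ := Set.Icc (μ1 - 2*σ) (μ1 + 2*σ) with hS
  have hmono : ∀ x, p x ≤ (1/(4*σ^2)) * ((x - μ1)^2 * p x) + S.indicator (fun _ => d) x := by
    intro x
    by_cases hx : x ∈ S
    · rw [Set.indicator_of_mem hx]
      have : 0 ≤ (1/(4*σ^2)) * ((x - μ1)^2 * p x) :=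
        mul_nonneg (by positivity) (mul_nonneg (sq_nonneg _) (hnn x))
      linarith [hbd x]
    · rw [Set.indicator_of_notMem hx]
      simp only [hS, Set.mem_Icc, not_and_or, not_le] at hx
      have h4 : 4*σ^2 ≤ (x - μ1)^2 := by
        rcases hx with h | h <;> nlinarith
      have hpx := hnn x
      rw [add_zero]
      rw [div_mul_eq_mul_div, one_mul, le_div_iff₀ (by positivity)]
      nlinarith
  have hii : Integrable (S.indicator (fun _ => d)) := by
    rw [integrable_indicator_iff measurableSet_Icc]
    exact integrableOn_const (by rw [Real.volume_Icc]; exact ENNReal.ofReal_ne_top)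
  have hint2 : Integrable (fun x => (1/(4*σ^2)) * ((x - μ1)^2 * p x) + S.indicator (fun _ => d) x) :=
    Integrable.add (hvint.const_mul _) hii
  have hle := integral_mono hp hint2 hmono
  rw [h1, integral_add (hvint.const_mul _) hii, integral_const_mul, hv,
    integral_indicator_const d measurableSet_Icc, measureReal_def, Real.volume_Icc] at hle
  have h2 : (ENNReal.ofReal (μ1 + 2*σ - (μ1 - 2*σ))).toReal = 4*σ := by
    rw [ENNReal.toReal_ofReal (by linarith)]; ring
  rw [h2] at hle
  have h5 : (1/(4*σ^2)) * σ^2 = 1/4 := by field_simp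
  rw [h5] at hle
  simp only [smul_eq_mul] at hle
  nlinarith

noncomputable def statBad (t s : ℝ) : Set ℝ :=
  ⋃ k : ℤ, Set.Icc (k*(2*π/t) - s) (k*(2*π/t) + s)

lemma statBad_meas (t s : ℝ) : MeasurableSet (statBad t s) :=
  MeasurableSet.iUnion (fun _ => measurableSet_Icc)

lemma stat_inner (p : ℝ → ℝ) (d t s R x : ℝ) (hp : Integrable p) (hpm : Measurable p)
    (hnn : ∀ x, 0 ≤ p x) (hbd : ∀ x, p x ≤ d) (hd : 0 < d)
    (ht : 0 < t) (hs : 0 < s) (hsL : t * s ≤ π) (hR : 0 < R) :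
    ∫ y, Set.indicator (statBad t s ∩ Set.Icc (-R) R) (fun _ => (1:ℝ)) (x - y) * p y
      ≤ d * (2*s) * (R*t/π + 2) := by
  have hπ := Real.pi_pos
  set L : ℝ := 2*π/t with hL
  have hL0 : 0 < L := by positivity
  set K : ℤ := ⌊(R+s)/L⌋ with hK
  have hK0 : 0 ≤ K := Int.floor_nonneg.2 (by positivity)
  set T : Set ℝ := ⋃ k ∈ Finset.Icc (-K) K, Set.Icc (x - k*L - s) (x - k*L + s) with hT
  have hTm : MeasurableSet T := (Finset.Icc (-K) K).measurableSet_biUnion (fun _ _ => measurableSet_Icc)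
  have hpt : ∀ y, Set.indicator (statBad t s ∩ Set.Icc (-R) R) (fun _ => (1:ℝ)) (x - y) * p y
      ≤ T.indicator (fun _ => d) y := by
    intro y
    by_cases hxy : x - y ∈ statBad t s ∩ Set.Icc (-R) R
    · obtain ⟨hb, hicc⟩ := hxy
      obtain ⟨_, ⟨k, rfl⟩, hk⟩ := hb
      simp only [Set.mem_Icc] at hk hicc
      have habs : |(k:ℝ)*L| ≤ R + s := by
        rw [abs_le]
        constructor <;> [nlinarith; nlinarith]
      have hkabs : |k| ≤ K := by
        apply Int.le_floor.2
        rw [le_div_iff₀ hL0]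
        push_cast
        rw [abs_mul, abs_of_pos hL0] at habs
        exact habs
      have hkK : k ∈ Finset.Icc (-K) K := by
        rw [Finset.mem_Icc]
        exact ⟨neg_le_of_abs_le hkabs, le_of_abs_le hkabs⟩
      have hyT : y ∈ T := by
        rw [hT]
        refine Set.mem_biUnion hkK ?_
        rw [Set.mem_Icc]
        constructor <;> linarith [hk.1, hk.2]
      rw [Set.indicator_of_mem (show x - y ∈ statBad t s ∩ Set.Icc (-R) R from
          ⟨Set.mem_iUnion.2 ⟨k, Set.mem_Icc.2 hk⟩, Set.mem_Icc.2 hicc⟩),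
        Set.indicator_of_mem hyT, one_mul]
      exact hbd y
    · rw [Set.indicator_of_notMem hxy, zero_mul]
      exact Set.indicator_nonneg (fun _ _ => hd.le) y
  have hcard : ((Finset.Icc (-K) K).card : ℝ) = 2*(K:ℝ)+1 := by
    rw [Int.card_Icc]
    have h1 : (K + 1 - -K) = 2*K+1 := by ring
    rw [h1]
    have h2 : ((2*K+1).toNat : ℤ) = 2*K+1 := Int.toNat_of_nonneg (by linarith)
    have := congrArg (Int.cast : ℤ → ℝ) h2
    push_cast at this ⊢
    linarith
  have hvT : volume T ≤ (Finset.Icc (-K) K).card • ENNReal.ofReal (2*s) := by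
    calc volume T ≤ ∑ k ∈ Finset.Icc (-K) K, volume (Set.Icc (x - k*L - s) (x - k*L + s)) :=
          measure_biUnion_finset_le _ _
    _ = ∑ k ∈ Finset.Icc (-K) K, ENNReal.ofReal (2*s) := by
          apply Finset.sum_congr rfl
          intro k _
          rw [Real.volume_Icc]
          congr 1
          ring
    _ = (Finset.Icc (-K) K).card • ENNReal.ofReal (2*s) := Finset.sum_const _
  have hvTR : (volume T).toReal ≤ ((Finset.Icc (-K) K).card : ℝ) * (2*s) := by
    have hne : ((Finset.Icc (-K) K).card • ENNReal.ofReal (2*s)) ≠ ⊤ := by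
      rw [nsmul_eq_mul]
      exact ENNReal.mul_ne_top (ENNReal.natCast_ne_top _) ENNReal.ofReal_ne_top
    have h3 := ENNReal.toReal_mono hne hvT
    rw [nsmul_eq_mul, ENNReal.toReal_mul, ENNReal.toReal_natCast,
      ENNReal.toReal_ofReal (by positivity)] at h3
    exact h3
  have hintT : Integrable (T.indicator (fun _ => d)) := by
    rw [integrable_indicator_iff hTm]
    refine integrableOn_const ?_
    exact ne_of_lt (lt_of_le_of_lt hvT (by
      rw [nsmul_eq_mul]
      exact ENNReal.mul_lt_top (ENNReal.natCast_lt_top _) ENNReal.ofReal_lt_top))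
  have hintL : Integrable (fun y => Set.indicator (statBad t s ∩ Set.Icc (-R) R) (fun _ => (1:ℝ)) (x - y) * p y) := by
    apply Integrable.mono hp
    · exact (((measurable_const.indicator ((statBad_meas t s).inter measurableSet_Icc)).comp
        (measurable_const.sub measurable_id)).mul hpm).aestronglyMeasurable
    · filter_upwards with y
      rw [Real.norm_eq_abs, Real.norm_eq_abs, abs_mul]
      have h4 : |Set.indicator (statBad t s ∩ Set.Icc (-R) R) (fun _ => (1:ℝ)) (x - y)| ≤ 1 := by
        by_cases hmem : x - y ∈ statBad t s ∩ Set.Icc (-R) R <;>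
          simp [Set.indicator_of_mem, Set.indicator_of_notMem, hmem]
      calc |Set.indicator (statBad t s ∩ Set.Icc (-R) R) (fun _ => (1:ℝ)) (x-y)| * |p y| ≤ 1 * |p y| :=
            mul_le_mul_of_nonneg_right h4 (abs_nonneg _)
      _ = |p y| := one_mul _
  have h2K : 2*(K:ℝ)+1 ≤ R*t/π + 2 := by
    have h1 : (K:ℝ) ≤ (R+s)/L := Int.floor_le _
    have h2 : 2*((R+s)/L) = (R+s)*t/π := by rw [hL]; field_simp
    have h3 : (R+s)*t/π = R*t/π + s*t/π := by ring
    have h4 : s*t/π ≤ 1 := by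
      rw [div_le_one hπ]
      linarith
    linarith
  calc ∫ y, Set.indicator (statBad t s ∩ Set.Icc (-R) R) (fun _ => (1:ℝ)) (x - y) * p y
      ≤ ∫ y, T.indicator (fun _ => d) y := integral_mono hintL hintT hpt
  _ = (volume T).toReal * d := by rw [integral_indicator_const d hTm]; simp [smul_eq_mul, measureReal_def]
  _ ≤ ((2*(K:ℝ)+1) * (2*s)) * d := by
      have := hvTR
      rw [hcard] at this
      exact mul_le_mul_of_nonneg_right (by nlinarith) hd.le
  _ ≤ d * (2*s) * (R*t/π + 2) := by
      nlinarith [mul_le_mul_of_nonneg_left h2K (show (0:ℝ) ≤ d*(2*s) by positivity)]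

lemma stat_int_aux (p : ℝ → ℝ) (hpm : Measurable p) (hnn : ∀ x, 0 ≤ p x) (hp : Integrable p)
    (g : ℝ → ℝ) (hg : Measurable g) (hgb : ∀ u, |g u| ≤ 1) :
    Integrable (fun z : ℝ×ℝ => g (z.1 - z.2) * (p z.1 * p z.2)) ((volume : Measure ℝ).prod volume) := by
  apply Integrable.mono (hp.mul_prod hp)
  · exact ((hg.comp (measurable_fst.sub measurable_snd)).mul
      ((hpm.comp measurable_fst).mul (hpm.comp measurable_snd))).aestronglyMeasurable
  · filter_upwards with z
    rw [Real.norm_eq_abs, Real.norm_eq_abs, abs_mul]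
    calc |g (z.1-z.2)| * |p z.1 * p z.2| ≤ 1 * |p z.1 * p z.2| :=
          mul_le_mul_of_nonneg_right (hgb _) (abs_nonneg _)
    _ = |p z.1 * p z.2| := one_mul _

lemma stat_secmom (p : ℝ → ℝ) (σ μ1 : ℝ) (hp : Integrable p) (h1 : ∫ x, p x = 1)
    (hv2 : Integrable (fun x => (x - μ1)^2 * p x)) (hv2v : ∫ x, (x - μ1)^2 * p x = σ^2)
    (hv1 : Integrable (fun x => (x - μ1) * p x)) (hv1v : ∫ x, (x - μ1) * p x = 0) :
    Integrable (fun z : ℝ×ℝ => (z.1-z.2)^2 * (p z.1 * p z.2)) ((volume : Measure ℝ).prod volume) ∧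
    ∫ z : ℝ×ℝ, (z.1-z.2)^2 * (p z.1 * p z.2) ∂((volume : Measure ℝ).prod volume) = 2*σ^2 := by
  have hfe : (fun z : ℝ×ℝ => (z.1-z.2)^2 * (p z.1 * p z.2)) =
      (fun z : ℝ×ℝ => (((z.1-μ1)^2 * p z.1) * p z.2 + p z.1 * ((z.2-μ1)^2 * p z.2))
        - 2 * (((z.1-μ1) * p z.1) * ((z.2-μ1) * p z.2))) := by
    funext z
    ring
  have hI1 : Integrable (fun z : ℝ×ℝ => ((z.1-μ1)^2 * p z.1) * p z.2) ((volume : Measure ℝ).prod volume) :=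
    hv2.mul_prod hp
  have hI2 : Integrable (fun z : ℝ×ℝ => p z.1 * ((z.2-μ1)^2 * p z.2)) ((volume : Measure ℝ).prod volume) :=
    hp.mul_prod hv2
  have hI3 : Integrable (fun z : ℝ×ℝ => ((z.1-μ1) * p z.1) * ((z.2-μ1) * p z.2)) ((volume : Measure ℝ).prod volume) :=
    hv1.mul_prod hv1
  have hI12 : Integrable (fun z : ℝ×ℝ => ((z.1-μ1)^2 * p z.1) * p z.2 + p z.1 * ((z.2-μ1)^2 * p z.2)) ((volume : Measure ℝ).prod volume) := hI1.add hI2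
  have hI3c : Integrable (fun z : ℝ×ℝ => 2 * (((z.1-μ1) * p z.1) * ((z.2-μ1) * p z.2))) ((volume : Measure ℝ).prod volume) := hI3.const_mul 2
  constructor
  · rw [hfe]
    exact hI12.sub hI3c
  · rw [hfe, integral_sub hI12 hI3c, integral_add hI1 hI2,
      integral_const_mul,
      integral_prod_mul (fun x => (x - μ1)^2 * p x) p,
      integral_prod_mul p (fun x => (x - μ1)^2 * p x),
      integral_prod_mul (fun x => (x - μ1) * p x) (fun x => (x - μ1) * p x),
      h1, hv2v, hv1v]
    ring

lemma stat_bad_mass (p : ℝ → ℝ) (d t s R : ℝ) (hp : Integrable p) (hpm : Measurable p)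
    (hnn : ∀ x, 0 ≤ p x) (hbd : ∀ x, p x ≤ d) (hd : 0 < d) (h1 : ∫ x, p x = 1)
    (ht : 0 < t) (hs : 0 < s) (hsL : t * s ≤ π) (hR : 0 < R) :
    ∫ z : ℝ×ℝ, Set.indicator (statBad t s ∩ Set.Icc (-R) R) (fun _ => (1:ℝ)) (z.1 - z.2) * (p z.1 * p z.2)
      ∂((volume : Measure ℝ).prod volume) ≤ d * (2*s) * (R*t/π + 2) := by
  have hSm : MeasurableSet (statBad t s ∩ Set.Icc (-R) R) := (statBad_meas t s).inter measurableSet_Icc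
  have hgb : ∀ u, |Set.indicator (statBad t s ∩ Set.Icc (-R) R) (fun _ => (1:ℝ)) u| ≤ 1 := by
    intro u
    by_cases hmem : u ∈ statBad t s ∩ Set.Icc (-R) R <;>
      simp [Set.indicator_of_mem, Set.indicator_of_notMem, hmem]
  have hint := stat_int_aux p hpm hnn hp _ (measurable_const.indicator hSm) hgb
  rw [integral_prod _ hint]
  set C : ℝ := d * (2*s) * (R*t/π + 2) with hC
  have hC0 : 0 ≤ C := by
    rw [hC]
    have := Real.pi_pos
    positivity
  have hinner : ∀ x, ∫ y, Set.indicator (statBad t s ∩ Set.Icc (-R) R) (fun _ => (1:ℝ)) (x - y) * (p x * p y)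
      ≤ C * p x := by
    intro x
    have he : (fun y => Set.indicator (statBad t s ∩ Set.Icc (-R) R) (fun _ => (1:ℝ)) (x - y) * (p x * p y))
        = (fun y => p x * (Set.indicator (statBad t s ∩ Set.Icc (-R) R) (fun _ => (1:ℝ)) (x - y) * p y)) := by
      funext y; ring
    rw [he, integral_const_mul]
    rw [mul_comm C (p x)]
    exact mul_le_mul_of_nonneg_left (stat_inner p d t s R x hp hpm hnn hbd hd ht hs hsL hR) (hnn x)
  have hmarg : Integrable (fun x => ∫ y, Set.indicator (statBad t s ∩ Set.Icc (-R) R) (fun _ => (1:ℝ)) (x - y) * (p x * p y)) :=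
    hint.integral_prod_left
  calc ∫ x, ∫ y, Set.indicator (statBad t s ∩ Set.Icc (-R) R) (fun _ => (1:ℝ)) (x - y) * (p x * p y)
      ≤ ∫ x, C * p x := integral_mono hmarg (hp.const_mul C) hinner
  _ = C * 1 := by rw [integral_const_mul, h1]
  _ = C := mul_one C

lemma stat_mass_lb (p : ℝ → ℝ) (d σ μ1 t s : ℝ) (hp : Integrable p) (hpm : Measurable p)
    (hnn : ∀ x, 0 ≤ p x) (hbd : ∀ x, p x ≤ d) (hd : 0 < d) (hσ : 0 < σ) (h1 : ∫ x, p x = 1)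
    (hv2 : Integrable (fun x => (x - μ1)^2 * p x)) (hv2v : ∫ x, (x - μ1)^2 * p x = σ^2)
    (hv1 : Integrable (fun x => (x - μ1) * p x)) (hv1v : ∫ x, (x - μ1) * p x = 0)
    (ht : 0 < t) (hs : 0 < s) (hsL : t * s ≤ π) :
    7/8 - d*(2*s)*((4*σ)*t/π + 2) ≤
      ∫ z : ℝ×ℝ, Set.indicator (statBad t s)ᶜ (fun _ => (1:ℝ)) (z.1 - z.2) * (p z.1 * p z.2)
        ∂((volume : Measure ℝ).prod volume) := by
  have hπ := Real.pi_pos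
  set R : ℝ := 4*σ with hR
  have hR0 : 0 < R := by positivity
  obtain ⟨hsm_int, hsm_val⟩ := stat_secmom p σ μ1 hp h1 hv2 hv2v hv1 hv1v
  have hbadmass := stat_bad_mass p d t s R hp hpm hnn hbd hd h1 ht hs hsL hR0
  have hgb1 : ∀ u, |Set.indicator (statBad t s)ᶜ (fun _ => (1:ℝ)) u| ≤ 1 := by
    intro u
    by_cases hmem : u ∈ (statBad t s)ᶜ <;>
      simp [Set.indicator_of_mem, Set.indicator_of_notMem, hmem]
  have hgb2 : ∀ u, |Set.indicator (statBad t s ∩ Set.Icc (-R) R) (fun _ => (1:ℝ)) u| ≤ 1 := by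
    intro u
    by_cases hmem : u ∈ statBad t s ∩ Set.Icc (-R) R <;>
      simp [Set.indicator_of_mem, Set.indicator_of_notMem, hmem]
  have hintA := stat_int_aux p hpm hnn hp _ (measurable_const.indicator (statBad_meas t s).compl) hgb1
  have hintB := stat_int_aux p hpm hnn hp _
    (measurable_const.indicator ((statBad_meas t s).inter measurableSet_Icc)) hgb2
  have hintC : Integrable (fun z : ℝ×ℝ => (1/R^2) * ((z.1-z.2)^2 * (p z.1 * p z.2)))
      ((volume : Measure ℝ).prod volume) := hsm_int.const_mul _
  have hprod : Integrable (fun z : ℝ×ℝ => p z.1 * p z.2) ((volume : Measure ℝ).prod volume) :=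
    hp.mul_prod hp
  have hpt : ∀ z : ℝ×ℝ, p z.1 * p z.2 ≤
      Set.indicator (statBad t s)ᶜ (fun _ => (1:ℝ)) (z.1 - z.2) * (p z.1 * p z.2)
      + (Set.indicator (statBad t s ∩ Set.Icc (-R) R) (fun _ => (1:ℝ)) (z.1 - z.2) * (p z.1 * p z.2)
      + (1/R^2) * ((z.1-z.2)^2 * (p z.1 * p z.2))) := by
    intro z
    set u : ℝ := z.1 - z.2 with hu
    have hpp : 0 ≤ p z.1 * p z.2 := mul_nonneg (hnn _) (hnn _)
    have key : 1 ≤ Set.indicator (statBad t s)ᶜ (fun _ => (1:ℝ)) u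
        + (Set.indicator (statBad t s ∩ Set.Icc (-R) R) (fun _ => (1:ℝ)) u + u^2/R^2) := by
      have hA0 : 0 ≤ Set.indicator (statBad t s)ᶜ (fun _ => (1:ℝ)) u :=
        Set.indicator_nonneg (fun _ _ => zero_le_one) u
      have hB0 : 0 ≤ Set.indicator (statBad t s ∩ Set.Icc (-R) R) (fun _ => (1:ℝ)) u :=
        Set.indicator_nonneg (fun _ _ => zero_le_one) u
      have hC0 : 0 ≤ u^2/R^2 := by positivity
      by_cases hb : u ∈ statBad t s
      · by_cases hicc : u ∈ Set.Icc (-R) R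
        · rw [Set.indicator_of_mem (Set.mem_inter hb hicc)]
          linarith
        · have : R < |u| := by
            simp only [Set.mem_Icc, not_and_or, not_le] at hicc
            rcases hicc with h | h
            · rw [abs_of_neg (by linarith)]; linarith
            · rw [abs_of_pos (by linarith)]; linarith
          have h2 : 1 ≤ u^2/R^2 := by
            rw [le_div_iff₀ (by positivity), one_mul]
            nlinarith [abs_nonneg u, _root_.sq_abs u]
          linarith
      · rw [Set.indicator_of_mem (Set.mem_compl hb)]
        linarith
    calc p z.1 * p z.2 = 1 * (p z.1 * p z.2) := (one_mul _).symm
    _ ≤ (Set.indicator (statBad t s)ᶜ (fun _ => (1:ℝ)) u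
        + (Set.indicator (statBad t s ∩ Set.Icc (-R) R) (fun _ => (1:ℝ)) u + u^2/R^2)) * (p z.1 * p z.2) :=
        mul_le_mul_of_nonneg_right key hpp
    _ = _ := by rw [hu]; ring
  have hone : ∫ z : ℝ×ℝ, p z.1 * p z.2 ∂((volume : Measure ℝ).prod volume) = 1 := by
    rw [integral_prod_mul p p, h1]; norm_num
  have hintBC : Integrable (fun z : ℝ×ℝ =>
      Set.indicator (statBad t s ∩ Set.Icc (-R) R) (fun _ => (1:ℝ)) (z.1 - z.2) * (p z.1 * p z.2)
      + (1/R^2) * ((z.1-z.2)^2 * (p z.1 * p z.2))) ((volume : Measure ℝ).prod volume) := hintB.add hintC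
  have hle := integral_mono hprod (hintA.add hintBC) hpt
  simp only [Pi.add_apply] at hle
  rw [integral_add hintA hintBC] at hle
  rw [hone] at hle
  rw [integral_add hintB hintC] at hle
  rw [integral_const_mul, hsm_val] at hle
  have hCval : (1/R^2) * (2*σ^2) = 1/8 := by
    rw [hR]; field_simp; ring
  rw [hCval] at hle
  linarith

noncomputable def statG (t s : ℝ) : ℝ → ℝ := Set.indicator (statBad t s)ᶜ (fun _ => (1:ℝ))

lemma statG_meas (t s : ℝ) : Measurable (statG t s) :=
  measurable_const.indicator (statBad_meas t s).compl

lemma statG_abs_le (t s : ℝ) : ∀ u, |statG t s u| ≤ 1 := by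
  intro u
  unfold statG
  by_cases hmem : u ∈ (statBad t s)ᶜ <;>
    simp [Set.indicator_of_mem, Set.indicator_of_notMem, hmem]

lemma statBad_mono (t s s' : ℝ) (h : s ≤ s') : statBad t s ⊆ statBad t s' := by
  intro u hu
  obtain ⟨_, ⟨k, rfl⟩, hk⟩ := hu
  exact Set.mem_iUnion.2 ⟨k, Set.mem_Icc.2 ⟨by linarith [(Set.mem_Icc.1 hk).1],
    by linarith [(Set.mem_Icc.1 hk).2]⟩⟩

lemma statBad_not_mem (t s u : ℝ) (h : u ∉ statBad t s) :
    ∀ k : ℤ, s < |u - k * (2*π/t)| := by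
  intro k
  by_contra hc
  push_neg at hc
  rw [abs_le] at hc
  exact h (Set.mem_iUnion.2 ⟨k, Set.mem_Icc.2 ⟨by linarith [hc.1], by linarith [hc.2]⟩⟩)

lemma stat_base (t s u : ℝ) (ht : 0 < t) (hs : 0 ≤ s) (hts : t * s ≤ π)
    (h : u ∉ statBad t s) : 2/π^2 * t^2 * s^2 ≤ 1 - Real.cos (t*u) := by
  have := stat_cos_lb t s u ht hs hts (statBad_not_mem t s u h)
  calc 2/π^2 * t^2 * s^2 = 2/π^2 * (t*s)^2 := by ring
  _ ≤ 1 - Real.cos (t*u) := this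

lemma stat_sum_pointwise (t s1 s2 s3 s4 s5 s6 u : ℝ) (ht : 0 < t)
    (h01 : 0 ≤ s1) (h12 : s1 ≤ s2) (h23 : s2 ≤ s3) (h34 : s3 ≤ s4) (h45 : s4 ≤ s5) (h56 : s5 ≤ s6)
    (h6π : t * s6 ≤ π) :
    2/π^2 * t^2 * (s1^2 * statG t s1 u + ((s2^2 - s1^2) * statG t s2 u +
      ((s3^2 - s2^2) * statG t s3 u + ((s4^2 - s3^2) * statG t s4 u +
      ((s5^2 - s4^2) * statG t s5 u + (s6^2 - s5^2) * statG t s6 u))))) ≤ 1 - Real.cos (t*u) := by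
  have hπ := Real.pi_pos
  have hcos := Real.cos_le_one (t*u)
  have h1π : t * s1 ≤ π := by nlinarith
  have h2π : t * s2 ≤ π := by nlinarith
  have h3π : t * s3 ≤ π := by nlinarith
  have h4π : t * s4 ≤ π := by nlinarith
  have h5π : t * s5 ≤ π := by nlinarith
  have gval : ∀ s, (u ∈ statBad t s → statG t s u = 0) ∧ (u ∉ statBad t s → statG t s u = 1) := by
    intro s
    constructor
    · intro hm
      exact Set.indicator_of_notMem (by simpa using hm) _
    · intro hm
      exact Set.indicator_of_mem (Set.mem_compl hm) _
  by_cases b1 : u ∈ statBad t s1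
  · rw [(gval s1).1 b1, (gval s2).1 (statBad_mono t s1 s2 h12 b1),
      (gval s3).1 (statBad_mono t s1 s3 (by linarith) b1),
      (gval s4).1 (statBad_mono t s1 s4 (by linarith) b1),
      (gval s5).1 (statBad_mono t s1 s5 (by linarith) b1),
      (gval s6).1 (statBad_mono t s1 s6 (by linarith) b1)]
    ring_nf
    linarith
  by_cases b2 : u ∈ statBad t s2
  · rw [(gval s1).2 b1, (gval s2).1 b2,
      (gval s3).1 (statBad_mono t s2 s3 h23 b2),
      (gval s4).1 (statBad_mono t s2 s4 (by linarith) b2),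
      (gval s5).1 (statBad_mono t s2 s5 (by linarith) b2),
      (gval s6).1 (statBad_mono t s2 s6 (by linarith) b2)]
    have := stat_base t s1 u ht h01 h1π b1
    ring_nf at this ⊢
    linarith
  by_cases b3 : u ∈ statBad t s3
  · rw [(gval s1).2 b1, (gval s2).2 b2, (gval s3).1 b3,
      (gval s4).1 (statBad_mono t s3 s4 h34 b3),
      (gval s5).1 (statBad_mono t s3 s5 (by linarith) b3),
      (gval s6).1 (statBad_mono t s3 s6 (by linarith) b3)]
    have := stat_base t s2 u ht (by linarith) h2π b2
    ring_nf at this ⊢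
    linarith
  by_cases b4 : u ∈ statBad t s4
  · rw [(gval s1).2 b1, (gval s2).2 b2, (gval s3).2 b3, (gval s4).1 b4,
      (gval s5).1 (statBad_mono t s4 s5 h45 b4),
      (gval s6).1 (statBad_mono t s4 s6 (by linarith) b4)]
    have := stat_base t s3 u ht (by linarith) h3π b3
    ring_nf at this ⊢
    linarith
  by_cases b5 : u ∈ statBad t s5
  · rw [(gval s1).2 b1, (gval s2).2 b2, (gval s3).2 b3, (gval s4).2 b4, (gval s5).1 b5,
      (gval s6).1 (statBad_mono t s5 s6 h56 b5)]
    have := stat_base t s4 u ht (by linarith) h4π b4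
    ring_nf at this ⊢
    linarith
  by_cases b6 : u ∈ statBad t s6
  · rw [(gval s1).2 b1, (gval s2).2 b2, (gval s3).2 b3, (gval s4).2 b4, (gval s5).2 b5,
      (gval s6).1 b6]
    have := stat_base t s5 u ht (by linarith) h5π b5
    ring_nf at this ⊢
    linarith
  · rw [(gval s1).2 b1, (gval s2).2 b2, (gval s3).2 b3, (gval s4).2 b4, (gval s5).2 b5,
      (gval s6).2 b6]
    have := stat_base t s6 u ht (by linarith) h6π b6
    ring_nf at this ⊢
    linarith

set_option maxHeartbeats 1000000 in
lemma stat_Jlb (p : ℝ → ℝ) (d σ μ1 t : ℝ) (hp : Integrable p) (hpm : Measurable p)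
    (hnn : ∀ x, 0 ≤ p x) (hbd : ∀ x, p x ≤ d) (hd : 0 < d) (hσ : 0 < σ) (h1 : ∫ x, p x = 1)
    (hv2 : Integrable (fun x => (x - μ1)^2 * p x)) (hv2v : ∫ x, (x - μ1)^2 * p x = σ^2)
    (hv1 : Integrable (fun x => (x - μ1) * p x)) (hv1v : ∫ x, (x - μ1) * p x = 0)
    (ht : 0 < t) :
    t^2/(48*d^2*(2*σ*t+π)^2) ≤
      ∫ z : ℝ×ℝ, (1 - Real.cos (t*(z.1-z.2))) * (p z.1 * p z.2) ∂((volume : Measure ℝ).prod volume) := by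
  have hπ := Real.pi_pos
  set B : ℝ := 2*σ*t + π with hB
  have hB0 : 0 < B := by positivity
  have hdσ : 3/16 ≤ d*σ := stat_dsig p d σ μ1 hd hσ hp hnn h1 hbd hv2 hv2v
  set β : ℝ := 7*π/(640*(d*B)) with hβ
  have hβ0 : 0 < β := by positivity
  have hdB : (3/8)*t ≤ d*B := by
    have h2 : d*B = 2*(d*σ)*t + d*π := by rw [hB]; ring
    nlinarith [mul_pos hd hπ]
  clear_value B β
  have hts6 : t*(19*β) ≤ π := by
    rw [hβ]
    rw [show t*(19*(7*π/(640*(d*B)))) = (133*t)/(640*(d*B)) * π by field_simp; ring]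
    have h3 : (133*t)/(640*(d*B)) ≤ 1 := by
      rw [div_le_one (by positivity)]
      linarith
    nlinarith
  have hFgen : ∀ k : ℝ, 0 < k → k ≤ 19 →
      7/8 - 7*k/160 ≤ ∫ z : ℝ×ℝ, statG t (k*β) (z.1-z.2) * (p z.1 * p z.2)
        ∂((volume : Measure ℝ).prod volume) := by
    intro k hk0 hk19
    have hs0 : 0 < k*β := by positivity
    have hsL : t*(k*β) ≤ π := by
      have : t*(k*β) ≤ t*(19*β) := by nlinarith [mul_pos ht hβ0]
      linarith
    have hml := stat_mass_lb p d σ μ1 t (k*β) hp hpm hnn hbd hd hσ h1 hv2 hv2v hv1 hv1v ht hs0 hsL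
    have heq : d*(2*(k*β))*((4*σ)*t/π + 2) = 7*k/160 := by
      rw [hβ, hB]
      field_simp
      ring
    rw [heq] at hml
    exact hml
  have hgi : ∀ k : ℝ, Integrable (fun z : ℝ×ℝ => statG t (k*β) (z.1-z.2) * (p z.1 * p z.2))
      ((volume : Measure ℝ).prod volume) :=
    fun k => stat_int_aux p hpm hnn hp _ (statG_meas t (k*β)) (statG_abs_le t (k*β))
  have hcosint : Integrable (fun z : ℝ×ℝ => Real.cos (t*(z.1-z.2)) * (p z.1 * p z.2))
      ((volume : Measure ℝ).prod volume) :=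
    stat_int_aux p hpm hnn hp (fun u => Real.cos (t*u))
      (Real.measurable_cos.comp (measurable_const.mul measurable_id)) (fun u => Real.abs_cos_le_one _)
  have hprod : Integrable (fun z : ℝ×ℝ => p z.1 * p z.2) ((volume : Measure ℝ).prod volume) :=
    hp.mul_prod hp
  have hJint : Integrable (fun z : ℝ×ℝ => (1 - Real.cos (t*(z.1-z.2))) * (p z.1 * p z.2))
      ((volume : Measure ℝ).prod volume) := by
    have hfe : (fun z : ℝ×ℝ => (1 - Real.cos (t*(z.1-z.2))) * (p z.1 * p z.2))
        = (fun z : ℝ×ℝ => p z.1 * p z.2 - Real.cos (t*(z.1-z.2)) * (p z.1 * p z.2)) := by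
      funext z; ring
    rw [hfe]
    exact hprod.sub hcosint
  -- coefficients
  set C1 : ℝ := 2/π^2 * t^2 * (6*β)^2 with hC1
  set C2 : ℝ := 2/π^2 * t^2 * ((10*β)^2 - (6*β)^2) with hC2
  set C3 : ℝ := 2/π^2 * t^2 * ((13*β)^2 - (10*β)^2) with hC3
  set C4 : ℝ := 2/π^2 * t^2 * ((15*β)^2 - (13*β)^2) with hC4
  set C5 : ℝ := 2/π^2 * t^2 * ((17*β)^2 - (15*β)^2) with hC5
  set C6 : ℝ := 2/π^2 * t^2 * ((19*β)^2 - (17*β)^2) with hC6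
  have hI1 : Integrable (fun z : ℝ×ℝ => C1 * (statG t (6*β) (z.1-z.2) * (p z.1 * p z.2)))
      ((volume : Measure ℝ).prod volume) := (hgi 6).const_mul C1
  have hI2 : Integrable (fun z : ℝ×ℝ => C2 * (statG t (10*β) (z.1-z.2) * (p z.1 * p z.2)))
      ((volume : Measure ℝ).prod volume) := (hgi 10).const_mul C2
  have hI3 : Integrable (fun z : ℝ×ℝ => C3 * (statG t (13*β) (z.1-z.2) * (p z.1 * p z.2)))
      ((volume : Measure ℝ).prod volume) := (hgi 13).const_mul C3
  have hI4 : Integrable (fun z : ℝ×ℝ => C4 * (statG t (15*β) (z.1-z.2) * (p z.1 * p z.2)))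
      ((volume : Measure ℝ).prod volume) := (hgi 15).const_mul C4
  have hI5 : Integrable (fun z : ℝ×ℝ => C5 * (statG t (17*β) (z.1-z.2) * (p z.1 * p z.2)))
      ((volume : Measure ℝ).prod volume) := (hgi 17).const_mul C5
  have hI6 : Integrable (fun z : ℝ×ℝ => C6 * (statG t (19*β) (z.1-z.2) * (p z.1 * p z.2)))
      ((volume : Measure ℝ).prod volume) := (hgi 19).const_mul C6
  have hI56 : Integrable (fun z : ℝ×ℝ => C5 * (statG t (17*β) (z.1-z.2) * (p z.1 * p z.2))
      + C6 * (statG t (19*β) (z.1-z.2) * (p z.1 * p z.2))) ((volume : Measure ℝ).prod volume) := hI5.add hI6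
  have hI46 : Integrable (fun z : ℝ×ℝ => C4 * (statG t (15*β) (z.1-z.2) * (p z.1 * p z.2))
      + (C5 * (statG t (17*β) (z.1-z.2) * (p z.1 * p z.2))
      + C6 * (statG t (19*β) (z.1-z.2) * (p z.1 * p z.2)))) ((volume : Measure ℝ).prod volume) := hI4.add hI56
  have hI36 : Integrable (fun z : ℝ×ℝ => C3 * (statG t (13*β) (z.1-z.2) * (p z.1 * p z.2))
      + (C4 * (statG t (15*β) (z.1-z.2) * (p z.1 * p z.2))
      + (C5 * (statG t (17*β) (z.1-z.2) * (p z.1 * p z.2))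
      + C6 * (statG t (19*β) (z.1-z.2) * (p z.1 * p z.2))))) ((volume : Measure ℝ).prod volume) := hI3.add hI46
  have hI26 : Integrable (fun z : ℝ×ℝ => C2 * (statG t (10*β) (z.1-z.2) * (p z.1 * p z.2))
      + (C3 * (statG t (13*β) (z.1-z.2) * (p z.1 * p z.2))
      + (C4 * (statG t (15*β) (z.1-z.2) * (p z.1 * p z.2))
      + (C5 * (statG t (17*β) (z.1-z.2) * (p z.1 * p z.2))
      + C6 * (statG t (19*β) (z.1-z.2) * (p z.1 * p z.2)))))) ((volume : Measure ℝ).prod volume) := hI2.add hI36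
  have hI16 : Integrable (fun z : ℝ×ℝ => C1 * (statG t (6*β) (z.1-z.2) * (p z.1 * p z.2))
      + (C2 * (statG t (10*β) (z.1-z.2) * (p z.1 * p z.2))
      + (C3 * (statG t (13*β) (z.1-z.2) * (p z.1 * p z.2))
      + (C4 * (statG t (15*β) (z.1-z.2) * (p z.1 * p z.2))
      + (C5 * (statG t (17*β) (z.1-z.2) * (p z.1 * p z.2))
      + C6 * (statG t (19*β) (z.1-z.2) * (p z.1 * p z.2))))))) ((volume : Measure ℝ).prod volume) := hI1.add hI26
  -- pointwise bound
  have hpt : ∀ z : ℝ×ℝ, C1 * (statG t (6*β) (z.1-z.2) * (p z.1 * p z.2))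
      + (C2 * (statG t (10*β) (z.1-z.2) * (p z.1 * p z.2))
      + (C3 * (statG t (13*β) (z.1-z.2) * (p z.1 * p z.2))
      + (C4 * (statG t (15*β) (z.1-z.2) * (p z.1 * p z.2))
      + (C5 * (statG t (17*β) (z.1-z.2) * (p z.1 * p z.2))
      + C6 * (statG t (19*β) (z.1-z.2) * (p z.1 * p z.2))))))
      ≤ (1 - Real.cos (t*(z.1-z.2))) * (p z.1 * p z.2) := by
    intro z
    have hpp : 0 ≤ p z.1 * p z.2 := mul_nonneg (hnn _) (hnn _)
    have key := stat_sum_pointwise t (6*β) (10*β) (13*β) (15*β) (17*β) (19*β) (z.1-z.2) ht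
      (by positivity) (by linarith) (by linarith) (by linarith) (by linarith) (by linarith) hts6
    have hmul := mul_le_mul_of_nonneg_right key hpp
    calc C1 * (statG t (6*β) (z.1-z.2) * (p z.1 * p z.2))
        + (C2 * (statG t (10*β) (z.1-z.2) * (p z.1 * p z.2))
        + (C3 * (statG t (13*β) (z.1-z.2) * (p z.1 * p z.2))
        + (C4 * (statG t (15*β) (z.1-z.2) * (p z.1 * p z.2))
        + (C5 * (statG t (17*β) (z.1-z.2) * (p z.1 * p z.2))
        + C6 * (statG t (19*β) (z.1-z.2) * (p z.1 * p z.2))))))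
        = (2/π^2 * t^2 * ((6*β)^2 * statG t (6*β) (z.1-z.2) + (((10*β)^2 - (6*β)^2) * statG t (10*β) (z.1-z.2) +
          (((13*β)^2 - (10*β)^2) * statG t (13*β) (z.1-z.2) + (((15*β)^2 - (13*β)^2) * statG t (15*β) (z.1-z.2) +
          (((17*β)^2 - (15*β)^2) * statG t (17*β) (z.1-z.2) + ((19*β)^2 - (17*β)^2) * statG t (19*β) (z.1-z.2)))))))
          * (p z.1 * p z.2) := by
          rw [hC1, hC2, hC3, hC4, hC5, hC6]; ring
    _ ≤ (1 - Real.cos (t*(z.1-z.2))) * (p z.1 * p z.2) := hmul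
  have hle := integral_mono hI16 hJint hpt
  rw [integral_add hI1 hI26, integral_add hI2 hI36, integral_add hI3 hI46,
    integral_add hI4 hI56, integral_add hI5 hI6,
    integral_const_mul, integral_const_mul, integral_const_mul, integral_const_mul,
    integral_const_mul, integral_const_mul] at hle
  have hF1 := hFgen 6 (by norm_num) (by norm_num)
  have hF2 := hFgen 10 (by norm_num) (by norm_num)
  have hF3 := hFgen 13 (by norm_num) (by norm_num)
  have hF4 := hFgen 15 (by norm_num) (by norm_num)
  have hF5 := hFgen 17 (by norm_num) (by norm_num)
  have hF6 := hFgen 19 (by norm_num) (by norm_num)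
  have hC1p : 0 ≤ C1 := by rw [hC1]; positivity
  have hC2p : 0 ≤ C2 := by rw [hC2, show ((10*β)^2 - (6*β)^2) = 64*β^2 by ring]; positivity
  have hC3p : 0 ≤ C3 := by rw [hC3, show ((13*β)^2 - (10*β)^2) = 69*β^2 by ring]; positivity
  have hC4p : 0 ≤ C4 := by rw [hC4, show ((15*β)^2 - (13*β)^2) = 56*β^2 by ring]; positivity
  have hC5p : 0 ≤ C5 := by rw [hC5, show ((17*β)^2 - (15*β)^2) = 64*β^2 by ring]; positivity
  have hC6p : 0 ≤ C6 := by rw [hC6, show ((19*β)^2 - (17*β)^2) = 72*β^2 by ring]; positivity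
  -- combine: J ≥ Σ Cᵢ aᵢ
  have hsum : C1 * (7/8 - 7*6/160) + (C2 * (7/8 - 7*10/160) + (C3 * (7/8 - 7*13/160)
      + (C4 * (7/8 - 7*15/160) + (C5 * (7/8 - 7*17/160) + C6 * (7/8 - 7*19/160)))))
      ≤ ∫ z : ℝ×ℝ, (1 - Real.cos (t*(z.1-z.2))) * (p z.1 * p z.2) ∂((volume : Measure ℝ).prod volume) := by
    have t1 := mul_le_mul_of_nonneg_left hF1 hC1p
    have t2 := mul_le_mul_of_nonneg_left hF2 hC2p
    have t3 := mul_le_mul_of_nonneg_left hF3 hC3p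
    have t4 := mul_le_mul_of_nonneg_left hF4 hC4p
    have t5 := mul_le_mul_of_nonneg_left hF5 hC5p
    have t6 := mul_le_mul_of_nonneg_left hF6 hC6p
    linarith
  calc t^2/(48*d^2*B^2) = t^2*(1/48)/(d^2*B^2) := by ring
  _ ≤ t^2*(1489306/65536000)/(d^2*B^2) := by
      apply div_le_div_of_nonneg_right ?_ (by positivity)
      nlinarith [sq_nonneg t]
  _ = C1 * (7/8 - 7*6/160) + (C2 * (7/8 - 7*10/160) + (C3 * (7/8 - 7*13/160)
      + (C4 * (7/8 - 7*15/160) + (C5 * (7/8 - 7*17/160) + C6 * (7/8 - 7*19/160))))) := by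
      rw [hC1, hC2, hC3, hC4, hC5, hC6, hβ]
      field_simp
      ring
  _ ≤ _ := hsum

set_option maxHeartbeats 1000000 in
theorem statulevicius_bound
    (p : ℝ → ℝ) (d σ : ℝ) (hd : 0 < d) (hσ : 0 < σ)
    (hp_meas : Measurable p) (hp_nonneg : ∀ x, 0 ≤ p x)
    (hp_int : ∫ x, p x = 1)
    (hp_bdd : ∀ x, p x ≤ d)
    (h_mean_int : Integrable (fun x => x * p x))
    (h_sq_int : Integrable (fun x => x ^ 2 * p x))
    (h_var : ∫ x, (x - ∫ y, y * p y) ^ 2 * p x = σ ^ 2) :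
    ∀ t : ℝ,
      ‖∫ x : ℝ, Complex.exp ((t : ℂ) * x * Complex.I) * (p x : ℂ)‖ ≤
        Real.exp (-t ^ 2 / (96 * d ^ 2 * (2 * σ * |t| + π) ^ 2)) := by
  have hπ := Real.pi_pos
  have hp : Integrable p := by
    by_contra h
    rw [integral_undef h] at hp_int
    norm_num at hp_int
  set μ1 : ℝ := ∫ y, y * p y with hμ1
  have hv2 : Integrable (fun x => (x - μ1)^2 * p x) := by
    have he : (fun x => (x - μ1)^2 * p x)
        = fun x => (x^2 * p x - (2*μ1) * (x * p x)) + μ1^2 * p x := by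
      funext x; ring
    rw [he]
    exact (h_sq_int.sub (h_mean_int.const_mul _)).add (hp.const_mul _)
  have hv2v : ∫ x, (x - μ1)^2 * p x = σ^2 := h_var
  have hv1 : Integrable (fun x => (x - μ1) * p x) := by
    have he : (fun x => (x - μ1) * p x) = fun x => x * p x - μ1 * p x := by
      funext x; ring
    rw [he]
    exact h_mean_int.sub (hp.const_mul _)
  have hv1v : ∫ x, (x - μ1) * p x = 0 := by
    have he : (fun x => (x - μ1) * p x) = fun x => x * p x - μ1 * p x := by
      funext x; ring
    rw [he, integral_sub h_mean_int (hp.const_mul _), integral_const_mul, hp_int]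
    simp [hμ1]
  -- integrability of the complex integrand for any t
  have hfi : ∀ t : ℝ, Integrable (fun x : ℝ => Complex.exp ((t:ℂ)*x*Complex.I) * (p x : ℂ)) := by
    intro t
    apply Integrable.mono hp
    · apply Measurable.aestronglyMeasurable
      exact (Complex.measurable_exp.comp
        ((measurable_const.mul Complex.measurable_ofReal).mul measurable_const)).mul
        (Complex.measurable_ofReal.comp hp_meas)
    · filter_upwards with x
      rw [norm_mul]
      have h1 : ‖Complex.exp ((t:ℂ)*x*Complex.I)‖ = 1 := by
        rw [Complex.norm_exp]
        simp
      rw [h1, one_mul, Complex.norm_real, Real.norm_eq_abs]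
  have hconj : ∀ t : ℝ, (starRingEnd ℂ) (∫ x : ℝ, Complex.exp ((t:ℂ)*x*Complex.I) * (p x : ℂ))
      = ∫ x : ℝ, Complex.exp (((-t : ℝ):ℂ)*x*Complex.I) * (p x : ℂ) := by
    intro t
    rw [← integral_conj]
    congr 1
    funext x
    rw [map_mul, ← Complex.exp_conj]
    congr 1
    · rw [map_mul, map_mul, Complex.conj_I, Complex.conj_ofReal, Complex.conj_ofReal]
      push_cast
      ring
    · rw [Complex.conj_ofReal]
  -- main bound for positive t
  have main : ∀ t : ℝ, 0 < t →
      ‖∫ x : ℝ, Complex.exp ((t:ℂ)*x*Complex.I) * (p x : ℂ)‖ ≤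
        Real.exp (-t^2 / (96*d^2*(2*σ*t + π)^2)) := by
    intro t ht
    set f : ℂ := ∫ x : ℝ, Complex.exp ((t:ℂ)*x*Complex.I) * (p x : ℂ) with hf
    have hprod : Integrable (fun z : ℝ×ℝ => p z.1 * p z.2) ((volume : Measure ℝ).prod volume) :=
      hp.mul_prod hp
    have hcosint : Integrable (fun z : ℝ×ℝ => Real.cos (t*(z.1-z.2)) * (p z.1 * p z.2))
        ((volume : Measure ℝ).prod volume) :=
      stat_int_aux p hp_meas hp_nonneg hp (fun u => Real.cos (t*u))
        (Real.measurable_cos.comp (measurable_const.mul measurable_id)) (fun u => Real.abs_cos_le_one _)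
    have hone : ∫ z : ℝ×ℝ, p z.1 * p z.2 ∂((volume : Measure ℝ).prod volume) = 1 := by
      rw [integral_prod_mul p p, hp_int]; norm_num
    -- |f|^2 as a double integral of cos
    have habs2 : ‖f‖^2 =
        ∫ z : ℝ×ℝ, Real.cos (t*(z.1-z.2)) * (p z.1 * p z.2) ∂((volume : Measure ℝ).prod volume) := by
      have h1 : (‖f‖^2 : ℝ) = (f * (starRingEnd ℂ) f).re := by
        rw [Complex.mul_conj, Complex.sq_norm]
        simp
      have h2 : f * (starRingEnd ℂ) f =
          ∫ z : ℝ×ℝ, (Complex.exp ((t:ℂ)*z.1*Complex.I) * (p z.1 : ℂ)) *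
            (Complex.exp (((-t : ℝ):ℂ)*z.2*Complex.I) * (p z.2 : ℂ)) ∂((volume : Measure ℝ).prod volume) := by
        rw [hf, hconj t]
        exact (integral_prod_mul _ _).symm
      have h3 : ∀ z : ℝ×ℝ, (Complex.exp ((t:ℂ)*z.1*Complex.I) * (p z.1 : ℂ)) *
          (Complex.exp (((-t : ℝ):ℂ)*z.2*Complex.I) * (p z.2 : ℂ))
          = Complex.exp ((t*(z.1-z.2) : ℝ) * Complex.I) * ((p z.1 * p z.2 : ℝ) : ℂ) := by
        intro z
        rw [mul_mul_mul_comm, ← Complex.exp_add]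
        push_cast
        ring_nf
      have h4 : Integrable (fun z : ℝ×ℝ => (Complex.exp ((t:ℂ)*z.1*Complex.I) * (p z.1 : ℂ)) *
          (Complex.exp (((-t : ℝ):ℂ)*z.2*Complex.I) * (p z.2 : ℂ))) ((volume : Measure ℝ).prod volume) :=
        (hfi t).mul_prod (hfi (-t))
      rw [h1, h2, ← RCLike.re_to_complex, ← integral_re h4]
      congr 1
      funext z
      rw [RCLike.re_to_complex, h3 z, Complex.mul_re, Complex.ofReal_re, Complex.ofReal_im,
        mul_zero, sub_zero, Complex.exp_ofReal_mul_I_re]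
    -- J and its lower bound
    have hJint : Integrable (fun z : ℝ×ℝ => (1 - Real.cos (t*(z.1-z.2))) * (p z.1 * p z.2))
        ((volume : Measure ℝ).prod volume) := by
      have hfe : (fun z : ℝ×ℝ => (1 - Real.cos (t*(z.1-z.2))) * (p z.1 * p z.2))
          = (fun z : ℝ×ℝ => p z.1 * p z.2 - Real.cos (t*(z.1-z.2)) * (p z.1 * p z.2)) := by
        funext z; ring
      rw [hfe]
      exact hprod.sub hcosint
    have hJval : ∫ z : ℝ×ℝ, (1 - Real.cos (t*(z.1-z.2))) * (p z.1 * p z.2)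
        ∂((volume : Measure ℝ).prod volume) = 1 - ‖f‖^2 := by
      have hfe : (fun z : ℝ×ℝ => (1 - Real.cos (t*(z.1-z.2))) * (p z.1 * p z.2))
          = (fun z : ℝ×ℝ => p z.1 * p z.2 - Real.cos (t*(z.1-z.2)) * (p z.1 * p z.2)) := by
        funext z; ring
      rw [hfe, integral_sub hprod hcosint, hone, habs2]
    have hJlb := stat_Jlb p d σ μ1 t hp hp_meas hp_nonneg hp_bdd hd hσ hp_int hv2 hv2v hv1 hv1v ht
    -- conclude
    set E : ℝ := t^2/(48*d^2*(2*σ*t+π)^2) with hE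
    have hE0 : 0 < E := by rw [hE]; positivity
    have hsq : ‖f‖^2 ≤ Real.exp (-E) := by
      have h5 : ‖f‖^2 = 1 - ∫ z : ℝ×ℝ, (1 - Real.cos (t*(z.1-z.2))) * (p z.1 * p z.2)
          ∂((volume : Measure ℝ).prod volume) := by rw [hJval]; ring
      have h6 := Real.add_one_le_exp (-(∫ z : ℝ×ℝ, (1 - Real.cos (t*(z.1-z.2))) * (p z.1 * p z.2)
          ∂((volume : Measure ℝ).prod volume)))
      have h7 : Real.exp (-(∫ z : ℝ×ℝ, (1 - Real.cos (t*(z.1-z.2))) * (p z.1 * p z.2)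
          ∂((volume : Measure ℝ).prod volume))) ≤ Real.exp (-E) := by
        apply Real.exp_le_exp.2
        rw [hE]
        linarith
      linarith
    have hEhalf : (Real.exp (-t^2/(96*d^2*(2*σ*t+π)^2)))^2 = Real.exp (-E) := by
      rw [sq, ← Real.exp_add, hE]
      congr 1
      have hBne : (2*σ*t+π) ≠ 0 := by positivity
      field_simp
      ring
    have := hsq.trans_eq hEhalf.symm
    exact (pow_le_pow_iff_left₀ (norm_nonneg f) (Real.exp_pos _).le two_ne_zero).1 this
  -- all t
  intro t
  rcases lt_trichotomy t 0 with htneg | htzero | htpos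
  · have hb := main (-t) (by linarith)
    have heq := congrArg norm (hconj t)
    rw [Complex.norm_conj] at heq
    rw [heq, abs_of_neg htneg]
    have h9 : (-t)^2 = t^2 := by ring
    rw [h9] at hb
    exact hb
  · subst htzero
    simp only [Complex.ofReal_zero, zero_mul, Complex.exp_zero, one_mul]
    have hcoe : (∫ x : ℝ, ((p x : ℂ))) = ((∫ x : ℝ, p x : ℝ) : ℂ) := by
      exact integral_ofReal
    rw [hcoe, hp_int]
    norm_num
  · have hb := main t htpos
    rw [abs_of_pos htpos]
    exact hb
end
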